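/- arXiv:1212.1120 — 9 statements merged into one kernel-verified Lean document; each statement's English description precedes it below -/
import Mathlib

section
/- For f ∈ C(X): f is a continuous affine function if and only if there exists a unique u ∈ X* such that the affine function h_{u,α}(x) = ⟨u,x⟩ + α satisfies h_{u,α} ≤ f for some α ∈ ℝ. -/
open Set

noncomputable section

variable {X : Type*}

/-- The class of proper, lower semicontinuous, convex functions `X → ℝ ∪ {+∞}`,
encoded as `EReal`-valued functions never taking the value `⊥`. -/
def IsClFun (X : Type*) [NormedAddCommGroup X] [NormedSpace ℝ X] (f : X → EReal) : Prop :=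
  (∀ x, f x ≠ ⊥) ∧ (∃ x, f x ≠ ⊤) ∧ LowerSemicontinuous f ∧
  ∀ x y : X, ∀ a b : ℝ, 0 ≤ a → 0 ≤ b → a + b = 1 →
    f (a • x + b • y) ≤ (a : EReal) * f x + (b : EReal) * f y

/-- `C(X)`, as a subtype. -/
abbrev Cl (X : Type*) [NormedAddCommGroup X] [NormedSpace ℝ X] :=
  {f : X → EReal // IsClFun X f}

/-- The continuous affine function `h_{u,α}(x) = ⟨u,x⟩ + α`. -/
def aff [NormedAddCommGroup X] [NormedSpace ℝ X] (u : X →L[ℝ] ℝ) (α : ℝ) : X → EReal :=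
  fun x => ((u x + α : ℝ) : EReal)

theorem affMem [NormedAddCommGroup X] [NormedSpace ℝ X] (u : X →L[ℝ] ℝ) (α : ℝ) :
    IsClFun X (aff u α) := by
  refine ⟨fun x => EReal.coe_ne_bot _, ⟨0, EReal.coe_ne_top _⟩, ?_, ?_⟩
  · exact (continuous_coe_real_ereal.comp (by continuity)).lowerSemicontinuous
  · intro x y a b ha hb hab
    simp only [aff, map_add, map_smul, smul_eq_mul]
    rw [← EReal.coe_mul, ← EReal.coe_mul, ← EReal.coe_add, EReal.coe_le_coe_iff]
    have h : a * α + b * α = α := by rw [← add_mul, hab, one_mul]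
    nlinarith

/-- `h_{u,α}` as an element of `C(X)`. -/
def affCl [NormedAddCommGroup X] [NormedSpace ℝ X] (u : X →L[ℝ] ℝ) (α : ℝ) : Cl X :=
  ⟨aff u α, affMem u α⟩

/-- An operator on `C(X)` is fully order preserving if it is onto and
`f ≤ g ↔ T f ≤ T g` (pointwise order). -/
def FullyOrderPreserving [NormedAddCommGroup X] [NormedSpace ℝ X]
    (T : Cl X → Cl X) : Prop :=
  Function.Surjective T ∧ ∀ f g : Cl X, f.1 ≤ g.1 ↔ (T f).1 ≤ (T g).1

/-!
A continuous linear functional that is bounded above vanishes, so the only affine minorants of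
`h_{u,α}` have slope `u`. Conversely, separating points below the graph from the closed convex
epigraph (Hahn–Banach) shows that `f` is the supremum of its continuous affine minorants. If all
of them have slope `u`, then `f = u + β`, where `β` is the largest constant with `h_{u,β} ≤ f`,
which is finite because `f` is proper.
-/

theorem LinearMap.eq_zero_of_forall_le {𝕜 M : Type*} [Field 𝕜] [LinearOrder 𝕜]
    [IsStrictOrderedRing 𝕜] [AddCommGroup M] [Module 𝕜 M] (φ : M →ₗ[𝕜] 𝕜) (C : 𝕜)
    (h : ∀ x, φ x ≤ C) : φ = 0 := by
  have hnonpos : ∀ x, φ x ≤ 0 := by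
    intro x
    by_contra! hx
    obtain ⟨c, -, hC⟩ := exists_pos_lt_mul hx C
    exact (h (c • x)).not_gt (by rwa [map_smul, smul_eq_mul])
  exact LinearMap.ext fun x => le_antisymm (hnonpos x) (by simpa using hnonpos (-x))

theorem LowerSemicontinuous.isClosed_real_epigraph {Y : Type*} [TopologicalSpace Y]
    {f : Y → EReal} (hf : LowerSemicontinuous f) : IsClosed {p : Y × ℝ | f p.1 ≤ p.2} :=
  hf.isClosed_epigraph.preimage
    (continuous_fst.prodMk (continuous_coe_real_ereal.comp continuous_snd))

section Minorants

variable [NormedAddCommGroup X] [NormedSpace ℝ X] {f : X → EReal}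

theorem eq_of_aff_le_aff {u v : X →L[ℝ] ℝ} {α β : ℝ} (h : aff v β ≤ aff u α) : v = u := by
  have hle : ∀ x, (v - u) x ≤ α - β := fun x => by
    have := EReal.coe_le_coe_iff.1 (h x)
    rw [sub_apply]
    linarith
  exact sub_eq_zero.1 <| ContinuousLinearMap.coe_injective <|
    LinearMap.eq_zero_of_forall_le ((v - u : X →L[ℝ] ℝ) : X →ₗ[ℝ] ℝ) _ hle

theorem aff_le_iff (hf : ∀ x, f x ≠ ⊥) {v : X →L[ℝ] ℝ} {β : ℝ} :
    aff v β ≤ f ↔ ∀ x, f x ≠ ⊤ → v x + β ≤ (f x).toReal := by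
  refine forall_congr' fun x => ?_
  by_cases hx : f x = ⊤
  · simp [hx]
  · simp only [hx, ne_eq, not_false_eq_true, forall_const]
    rw [← EReal.coe_le_coe_iff, EReal.coe_toReal hx (hf x)]
    rfl

theorem exists_aff_le_of_separating_pos (hf : ∀ x, f x ≠ ⊥) {v : X →L[ℝ] ℝ} {c s t₀ : ℝ}
    {x₀ : X} (hc : 0 < c) (h₀ : v x₀ + c * t₀ < s)
    (hsep : ∀ x (t : ℝ), f x ≤ t → s < v x + c * t) :
    ∃ (w : X →L[ℝ] ℝ) (γ : ℝ), aff w γ ≤ f ∧ t₀ < w x₀ + γ := by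
  have hw : ∀ x, (-(c⁻¹ • v)) x + s / c = (s - v x) / c := fun x => by
    simp only [neg_apply, smul_apply, smul_eq_mul]
    field_simp
    ring
  refine ⟨-(c⁻¹ • v), s / c, (aff_le_iff hf).2 fun x hx => ?_, ?_⟩
  · rw [hw, div_le_iff₀ hc]
    linarith [hsep x _ (EReal.coe_toReal hx (hf x)).ge]
  · rw [hw, lt_div_iff₀ hc]
    linarith

theorem exists_aff_le_of_separating_zero {w v : X →L[ℝ] ℝ} {γ s t₀ : ℝ} {x₀ : X}
    (hw : aff w γ ≤ f) (h₀ : v x₀ < s) (hsep : ∀ x, f x ≠ ⊤ → s < v x) :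
    ∃ (w' : X →L[ℝ] ℝ) (γ' : ℝ), aff w' γ' ≤ f ∧ t₀ < w' x₀ + γ' := by
  obtain ⟨k, hk, hlt⟩ := exists_pos_lt_mul (sub_pos.2 h₀) (t₀ - (w x₀ + γ))
  refine ⟨w - k • v, γ + k * s, fun x => ?_, ?_⟩
  · by_cases hx : f x = ⊤
    · simp [hx]
    · refine le_trans ?_ (hw x)
      have := hsep x hx
      simp only [aff, EReal.coe_le_coe_iff, sub_apply, smul_apply, smul_eq_mul]
      nlinarith
  · simp only [sub_apply, smul_apply, smul_eq_mul]
    linarith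

namespace IsClFun

theorem convex_epigraph (hf : IsClFun X f) : Convex ℝ {p : X × ℝ | f p.1 ≤ p.2} := by
  rintro ⟨x, s⟩ (hx : f x ≤ s) ⟨y, t⟩ (hy : f y ≤ t) a b ha hb hab
  calc f (a • x + b • y) ≤ a * f x + b * f y := hf.2.2.2 x y a b ha hb hab
    _ ≤ a * s + b * t := by gcongr
    _ = ((a • s + b • t : ℝ) : EReal) := by norm_cast

theorem exists_separating_functional (hf : IsClFun X f) {x₀ : X} {t₀ : ℝ}
    (h : (t₀ : EReal) < f x₀) :
    ∃ (v : X →L[ℝ] ℝ) (c s : ℝ), 0 ≤ c ∧ v x₀ + c * t₀ < s ∧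
      ∀ x (t : ℝ), f x ≤ t → s < v x + c * t := by
  obtain ⟨φ, s, hφ₀, hφ⟩ := geometric_hahn_banach_point_closed hf.convex_epigraph
    hf.2.2.1.isClosed_real_epigraph (x := (x₀, t₀)) (fun h' : f x₀ ≤ t₀ => h'.not_gt h)
  set v := φ.comp (.inl ℝ X ℝ)
  have hφ_apply : ∀ x t, φ (x, t) = v x + φ (0, 1) * t := fun x t => by
    rw [mul_comm, ← smul_eq_mul, ← map_smul, ContinuousLinearMap.comp_apply, ← map_add]
    simp
  have hsep : ∀ x (t : ℝ), f x ≤ t → s < v x + φ (0, 1) * t := fun x t hxt =>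
    hφ_apply x t ▸ hφ (x, t) hxt
  refine ⟨v, φ (0, 1), s, ?_, hφ_apply x₀ t₀ ▸ hφ₀, hsep⟩
  -- the epigraph contains vertical rays, on which `φ` stays above `s`
  obtain ⟨x₁, hx₁⟩ := hf.2.1
  by_contra! hc
  set t := max (f x₁).toReal ((s - v x₁) / φ (0, 1))
  have hmem : f x₁ ≤ t := (EReal.coe_toReal hx₁ (hf.1 x₁)).ge.trans
    (EReal.coe_le_coe_iff.2 (le_max_left _ _))
  have hct : φ (0, 1) * t ≤ s - v x₁ := by
    calc φ (0, 1) * t ≤ φ (0, 1) * ((s - v x₁) / φ (0, 1)) :=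
          mul_le_mul_of_nonpos_left (le_max_right _ _) hc.le
      _ = s - v x₁ := mul_div_cancel₀ _ hc.ne
  linarith [hsep x₁ t hmem]

theorem exists_aff_le (hf : IsClFun X f) : ∃ (w : X →L[ℝ] ℝ) (γ : ℝ), aff w γ ≤ f := by
  obtain ⟨x₁, hx₁⟩ := hf.2.1
  set r := (f x₁).toReal
  have hr : f x₁ = r := (EReal.coe_toReal hx₁ (hf.1 x₁)).symm
  obtain ⟨v, c, s, -, h₀, hsep⟩ := hf.exists_separating_functional (x₀ := x₁) (t₀ := r - 1)
    (by rw [hr]; exact_mod_cast sub_one_lt r)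
  have hc : 0 < c := by linarith [hsep x₁ r hr.le, mul_sub c r 1]
  obtain ⟨w, γ, hw, -⟩ := exists_aff_le_of_separating_pos hf.1 hc h₀ hsep
  exact ⟨w, γ, hw⟩

theorem exists_aff_le_of_lt (hf : IsClFun X f) {x₀ : X} {t₀ : ℝ} (h : (t₀ : EReal) < f x₀) :
    ∃ (w : X →L[ℝ] ℝ) (γ : ℝ), aff w γ ≤ f ∧ t₀ < w x₀ + γ := by
  obtain ⟨v, c, s, hc, h₀, hsep⟩ := hf.exists_separating_functional h
  rcases hc.eq_or_lt with rfl | hc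
  · obtain ⟨w, γ, hw⟩ := hf.exists_aff_le
    refine exists_aff_le_of_separating_zero hw (by simpa using h₀) fun x hx => ?_
    simpa using hsep x _ (EReal.coe_toReal hx (hf.1 x)).ge
  · exact exists_aff_le_of_separating_pos hf.1 hc h₀ hsep

theorem exists_eq_aff_of_forall_aff_le_slope_eq (hf : IsClFun X f) {u : X →L[ℝ] ℝ} {α : ℝ}
    (hα : aff u α ≤ f) (hu : ∀ v β, aff v β ≤ f → v = u) : ∃ β, f = aff u β := by
  obtain ⟨x₁, hx₁⟩ := hf.2.1
  set A := {γ : ℝ | aff u γ ≤ f}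
  have hA : BddAbove A := ⟨(f x₁).toReal - u x₁, fun γ hγ => by
    linarith [(aff_le_iff hf.1).1 hγ x₁ hx₁]⟩
  refine ⟨sSup A, le_antisymm (fun x => ?_) ((aff_le_iff hf.1).2 fun x hx => ?_)⟩
  · by_contra! hx
    obtain ⟨v, γ, hv, hlt⟩ := hf.exists_aff_le_of_lt (t₀ := u x + sSup A) hx
    obtain rfl := hu v γ hv
    linarith [le_csSup hA hv]
  · have : sSup A ≤ (f x).toReal - u x := csSup_le ⟨α, hα⟩ fun γ hγ => by
      linarith [(aff_le_iff hf.1).1 hγ x hx]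
    linarith

end IsClFun

end Minorants

theorem affine_iff_unique_slope_minorant_general
    [NormedAddCommGroup X] [NormedSpace ℝ X]
    (f : Cl X) :
    (∃ (u : X →L[ℝ] ℝ) (α : ℝ), f.1 = aff u α) ↔
      (∃! u : X →L[ℝ] ℝ, ∃ α : ℝ, ∀ x, aff u α x ≤ f.1 x) := by
  constructor
  · rintro ⟨u, α, hf⟩
    exact ⟨u, ⟨α, hf.ge⟩, fun v ⟨β, hv⟩ => eq_of_aff_le_aff (hf ▸ hv)⟩
  · rintro ⟨u, ⟨α, hα⟩, huniq⟩
    exact ⟨u, f.2.exists_eq_aff_of_forall_aff_le_slope_eq hα fun v β hv => huniq v ⟨β, hv⟩⟩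

theorem affine_iff_unique_slope_minorant
    [NormedAddCommGroup X] [NormedSpace ℝ X] [CompleteSpace X]
    (f : Cl X) :
    (∃ (u : X →L[ℝ] ℝ) (α : ℝ), f.1 = aff u α) ↔
      (∃! u : X →L[ℝ] ℝ, ∃ α : ℝ, ∀ x, aff u α x ≤ f.1 x) :=
  affine_iff_unique_slope_minorant_general f
end
end

section
/- If f ∈ C(X) satisfies f ≤ h_{u,α} pointwise for some u ∈ X*, α ∈ ℝ, then f = h_{u,δ} for some δ ≤ α; in particular f is affine with the same linear part u. -/
open Set

noncomputable section

variable {X : Type*}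

theorem le_affine_implies_affine
    [NormedAddCommGroup X] [NormedSpace ℝ X] [CompleteSpace X]
    (f : Cl X) (u : X →L[ℝ] ℝ) (α : ℝ)
    (hle : ∀ x, f.1 x ≤ aff u α x) :
    ∃ δ : ℝ, δ ≤ α ∧ f.1 = aff u δ := by
  have hnb : ∀ x, f.1 x ≠ ⊥ := f.2.1
  have hnt : ∀ x, f.1 x ≠ ⊤ := fun x => ne_top_of_le_ne_top (EReal.coe_ne_top _) (hle x)
  set r : X → ℝ := fun x => (f.1 x).toReal with hrdef
  have hr : ∀ x, f.1 x = ((r x : ℝ) : EReal) := fun x => (EReal.coe_toReal (hnt x) (hnb x)).symm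
  have hconv : ∀ x y : X, ∀ a b : ℝ, 0 ≤ a → 0 ≤ b → a + b = 1 →
      r (a • x + b • y) ≤ a * r x + b * r y := by
    intro x y a b ha hb hab
    have h := f.2.2.2.2 x y a b ha hb hab
    rw [hr, hr, hr, ← EReal.coe_mul, ← EReal.coe_mul, ← EReal.coe_add] at h
    exact_mod_cast h
  have hler : ∀ x, r x ≤ u x + α := by
    intro x
    have h := hle x
    rw [hr] at h
    simp only [aff] at h
    exact_mod_cast h
  -- key: x ↦ r x - u x is constant
  have key : ∀ x y : X, r x - u x ≤ r y - u y := by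
    intro x y
    by_contra h
    push_neg at h
    set d : ℝ := (r x - u x) - (r y - u y) with hd
    have hdpos : 0 < d := by simp [hd]; linarith
    have he : 0 ≤ α - (r y - u y) := by have := hler y; linarith
    set e : ℝ := α - (r y - u y) with heq
    set t : ℝ := d / (d + 2 * e) with ht
    have hden : 0 < d + 2 * e := by linarith
    have ht0 : 0 < t := div_pos hdpos hden
    have ht1 : t ≤ 1 := by
      rw [ht, div_le_one hden]; linarith
    set z : X := y + t⁻¹ • (x - y) with hz
    have hxz : t • z + (1 - t) • y = x := by
      rw [hz, smul_add, smul_smul, mul_inv_cancel₀ ht0.ne', one_smul]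
      module
    have hcz : r x ≤ t * r z + (1 - t) * r y := by
      have := hconv z y t (1 - t) ht0.le (by linarith) (by ring)
      rwa [hxz] at this
    have huz : u x = t * u z + (1 - t) * u y := by
      conv_lhs => rw [← hxz]
      simp [map_add, map_smul]
    have hzle : r z ≤ u z + α := hler z
    -- so d ≤ t * e, i.e. d*(d+2e) ≤ d*e
    have hte : d ≤ t * e := by
      have : r x - u x ≤ t * α + (1 - t) * (r y - u y) := by
        rw [huz]; nlinarith [hcz, hzle, ht0.le, ht1]
      have : d ≤ t * e := by rw [hd, heq]; nlinarith
      exact this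
    rw [ht, div_mul_eq_mul_div, le_div_iff₀ hden] at hte
    nlinarith
  refine ⟨r 0, ?_, ?_⟩
  · have := hler 0; simpa using this
  · funext x
    have h1 := key x 0
    have h2 := key 0 x
    simp only [map_zero, sub_zero] at h1 h2
    have : r x = u x + r 0 := by linarith
    rw [hr x, aff, this]
end
end

section
/- If T : C(X) → C(X) is fully order preserving, then T maps continuous affine functions to continuous affine functions. -/
open Set

noncomputable section

variable {X : Type*}

/-- Two comparable continuous affine functions have the same linear part. -/
lemma slope_eq_of_le [NormedAddCommGroup X] [NormedSpace ℝ X] (w u : X →L[ℝ] ℝ) (d c : ℝ)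
    (hle : ∀ x : X, w x + d ≤ u x + c) : w = u := by
  have hL : ∀ x : X, (w - u) x ≤ c - d := by
    intro x
    have := hle x
    simp only [ContinuousLinearMap.sub_apply]
    linarith
  have hM : (0:ℝ) ≤ c - d := by
    have := hL 0
    simpa using this
  have key : ∀ z : X, (w - u) z ≤ 0 := by
    intro z
    by_contra hpos
    push_neg at hpos
    have h2 : (w - u) (((c - d + 1) / ((w - u) z)) • z) = c - d + 1 := by
      rw [map_smul, smul_eq_mul, div_mul_cancel₀ _ (ne_of_gt hpos)]
    have := hL (((c - d + 1) / ((w - u) z)) • z)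
    rw [h2] at this
    linarith
  ext x
  have h1 := key x
  have h2 := key (-x)
  rw [map_neg] at h2
  simp only [ContinuousLinearMap.sub_apply] at h1 h2
  linarith

/-- A proper lsc convex function dominated by a continuous affine function is affine
with the same slope. -/
lemma downset_affine [NormedAddCommGroup X] [NormedSpace ℝ X] (u : X →L[ℝ] ℝ) (α : ℝ)
    (g : X → EReal) (hg : IsClFun X g) (hle : ∀ x, g x ≤ aff u α x) :
    ∃ c : ℝ, g = aff u c := by
  have hle' : ∀ x, g x ≤ ((u x + α : ℝ) : EReal) := hle
  set φ : X → ℝ := fun x => (g x).toReal with hφdef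
  have hφ : ∀ x, g x = ((φ x : ℝ) : EReal) := by
    intro x
    exact (EReal.coe_toReal (ne_top_of_le_ne_top (EReal.coe_ne_top _) (hle' x)) (hg.1 x)).symm
  have hφle : ∀ x, φ x ≤ u x + α := by
    intro x
    have := hle' x
    rw [hφ x] at this
    exact_mod_cast this
  have key : ∀ x y : X, φ y - u y ≤ φ x - u x := by
    intro x y
    refine le_of_forall_pos_le_add ?_
    intro ε hε
    set M := α - (φ x - u x) with hMdef
    have hM : (0:ℝ) ≤ M := by
      have := hφle x; simp only [hMdef]; linarith
    set t := max 1 (M / ε + 1) with htdef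
    have ht1 : (1:ℝ) ≤ t := le_max_left _ _
    have htpos : (0:ℝ) < t := lt_of_lt_of_le one_pos ht1
    have ht0 : t ≠ 0 := ne_of_gt htpos
    set z := x + t • (y - x) with hz
    have hy : (1 - 1/t) • x + (1/t) • z = y := by
      rw [hz]; match_scalars <;> (field_simp; try ring)
    have h1 := hg.2.2.2 x z (1 - 1/t) (1/t)
      (by rw [sub_nonneg]; rw [div_le_one htpos]; exact ht1)
      (by positivity) (by ring)
    rw [hy] at h1
    rw [hφ x, hφ z, hφ y, ← EReal.coe_mul, ← EReal.coe_mul, ← EReal.coe_add,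
      EReal.coe_le_coe_iff] at h1
    have h2 : φ z ≤ u z + α := hφle z
    have h3 : u z = u x + t * (u y - u x) := by
      rw [hz]; simp only [map_add, map_smul, map_sub, smul_eq_mul]
    have hMt : M ≤ ε * t := by
      have h4 : M / ε + 1 ≤ t := le_max_right _ _
      have h5 : ε * (M / ε + 1) ≤ ε * t := by nlinarith
      have h6 : ε * (M / ε + 1) = M + ε := by field_simp
      linarith
    -- multiply h1 by t
    have h1' : t * φ y ≤ (t - 1) * φ x + φ z := by
      have := mul_le_mul_of_nonneg_left h1 htpos.le
      have he : t * ((1 - 1/t) * φ x + 1/t * φ z) = (t - 1) * φ x + φ z := by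
        field_simp
      linarith [he ▸ this]
    have h7 : t * φ y ≤ (t - 1) * φ x + u x + t * (u y - u x) + α := by
      rw [h3] at h2; linarith
    have h8 : t * (φ y - u y) ≤ t * (φ x - u x + ε) := by nlinarith
    exact le_of_mul_le_mul_left h8 htpos
  have hconst : ∀ x y : X, φ y - u y = φ x - u x :=
    fun x y => le_antisymm (key x y) (key y x)
  refine ⟨φ 0 - u 0, funext fun x => ?_⟩
  rw [hφ x]
  have := hconst 0 x
  show ((φ x : ℝ) : EReal) = ((u x + (φ 0 - u 0) : ℝ) : EReal)
  norm_cast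
  linarith

/-- Separation of a point below the graph from the epigraph. -/
lemma sep_epi [NormedAddCommGroup X] [NormedSpace ℝ X] (h : X → EReal) (hcl : IsClFun X h)
    (x0 : X) (t : ℝ) (ht : (t : EReal) < h x0) :
    ∃ (v : X →L[ℝ] ℝ) (r u₀ : ℝ), 0 ≤ r ∧ v x0 + r * t < u₀ ∧
      ∀ (y : X) (s : ℝ), h y ≤ (s : EReal) → u₀ < v y + r * s := by
  set E : Set (X × ℝ) := {p | h p.1 ≤ (p.2 : EReal)} with hE
  have hconvE : Convex ℝ E := by
    rintro ⟨x, s⟩ hxs ⟨y, s'⟩ hys a b ha hb hab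
    simp only [hE, mem_setOf_eq] at hxs hys ⊢
    have hxt : h x ≠ ⊤ := ne_top_of_le_ne_top (EReal.coe_ne_top s) hxs
    have hyt : h y ≠ ⊤ := ne_top_of_le_ne_top (EReal.coe_ne_top s') hys
    have hx' : h x = (((h x).toReal : ℝ) : EReal) := (EReal.coe_toReal hxt (hcl.1 x)).symm
    have hy' : h y = (((h y).toReal : ℝ) : EReal) := (EReal.coe_toReal hyt (hcl.1 y)).symm
    have h1 := hcl.2.2.2 x y a b ha hb hab
    rw [hx', hy'] at h1
    rw [hx'] at hxs; rw [hy'] at hys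
    have hxs' : (h x).toReal ≤ s := by exact_mod_cast hxs
    have hys' : (h y).toReal ≤ s' := by exact_mod_cast hys
    rw [← EReal.coe_mul, ← EReal.coe_mul, ← EReal.coe_add] at h1
    show h (a • x + b • y) ≤ ((a * s + b * s' : ℝ) : EReal)
    refine le_trans h1 ?_
    exact_mod_cast (by nlinarith : a * (h x).toReal + b * (h y).toReal ≤ a * s + b * s')
  have hclosedE : IsClosed E := by
    rw [← isOpen_compl_iff, isOpen_iff_mem_nhds]
    rintro ⟨x, s⟩ hp
    simp only [hE, mem_compl_iff, mem_setOf_eq, not_le] at hp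
    obtain ⟨q, hq1, hq2⟩ := EReal.exists_between_coe_real hp
    have h1 : {x' | (q : EReal) < h x'} ∈ nhds x := hcl.2.2.1 x (q : EReal) hq2
    have h2 : Iio q ∈ nhds s := Iio_mem_nhds (by exact_mod_cast hq1)
    rw [nhds_prod_eq]
    refine Filter.mem_of_superset (Filter.prod_mem_prod h1 h2) ?_
    rintro ⟨x', s'⟩ ⟨hx', hs'⟩
    simp only [hE, mem_compl_iff, mem_setOf_eq, not_le]
    exact lt_trans (by exact_mod_cast hs' : ((s' : ℝ) : EReal) < (q : EReal)) hx'
  have hnm : (x0, t) ∉ E := by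
    simp only [hE, mem_setOf_eq, not_le]
    exact ht
  obtain ⟨F, u₀, hFx, hFE⟩ := geometric_hahn_banach_point_closed hconvE hclosedE hnm
  set v : X →L[ℝ] ℝ := F.comp (ContinuousLinearMap.inl ℝ X ℝ) with hv
  set r : ℝ := F (0, 1) with hr
  have hF : ∀ (y : X) (s : ℝ), F (y, s) = v y + r * s := by
    intro y s
    have hsplit : (y, s) = (y, (0:ℝ)) + s • ((0:X), (1:ℝ)) := by
      simp [Prod.ext_iff]
    rw [hsplit, map_add, map_smul, smul_eq_mul]
    simp [hv, hr, ContinuousLinearMap.comp_apply]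
    ring
  obtain ⟨x1, hx1⟩ := hcl.2.1
  have hx1m : h x1 = (((h x1).toReal : ℝ) : EReal) := (EReal.coe_toReal hx1 (hcl.1 x1)).symm
  set m := (h x1).toReal with hm
  have hmem : ∀ s : ℝ, m ≤ s → u₀ < v x1 + r * s := by
    intro s hs
    have : (x1, s) ∈ E := by
      simp only [hE, mem_setOf_eq]
      rw [hx1m]
      exact_mod_cast hs
    have := hFE _ this
    rwa [hF] at this
  have hrnn : 0 ≤ r := by
    by_contra hneg
    push_neg at hneg
    set s := max m ((u₀ - v x1 - 1) / r) with hs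
    have h1 := hmem s (le_max_left _ _)
    have h2 : (u₀ - v x1 - 1) / r ≤ s := le_max_right _ _
    have h3 : r * s ≤ u₀ - v x1 - 1 := by
      rw [div_le_iff_of_neg hneg] at h2
      linarith [h2]
    linarith
  refine ⟨v, r, u₀, hrnn, ?_, ?_⟩
  · have := hFx
    rwa [hF] at this
  · intro y s hy
    have : (y, s) ∈ E := hy
    have := hFE _ this
    rwa [hF] at this

/-- If all continuous affine minorants of a proper lsc convex function share the same
linear part, the function is itself continuous affine. -/
lemma chain_affine [NormedAddCommGroup X] [NormedSpace ℝ X] (h : X → EReal) (hcl : IsClFun X h)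
    (hsl : ∀ (w₁ w₂ : X →L[ℝ] ℝ) (d₁ d₂ : ℝ),
      (∀ x, aff w₁ d₁ x ≤ h x) → (∀ x, aff w₂ d₂ x ≤ h x) → w₁ = w₂) :
    ∃ (v : X →L[ℝ] ℝ) (β : ℝ), h = aff v β := by
  obtain ⟨x1, hx1⟩ := hcl.2.1
  have hx1m : h x1 = (((h x1).toReal : ℝ) : EReal) := (EReal.coe_toReal hx1 (hcl.1 x1)).symm
  set m := (h x1).toReal with hm
  -- Step 1: existence of an affine minorant
  have hmin : ∃ (w : X →L[ℝ] ℝ) (c : ℝ), ∀ x, aff w c x ≤ h x := by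
    have ht : ((m - 1 : ℝ) : EReal) < h x1 := by
      rw [hx1m]; exact_mod_cast (by linarith : m - 1 < m)
    obtain ⟨v, r, u₀, hr, hlt, hall⟩ := sep_epi h hcl x1 (m - 1) ht
    have hrpos : 0 < r := by
      rcases hr.lt_or_eq with h' | h'
      · exact h'
      · exfalso
        have := hall x1 m (le_of_eq hx1m)
        rw [← h'] at this hlt
        simp only [zero_mul, add_zero] at this hlt
        linarith
    refine ⟨-(r⁻¹ • v), u₀ / r, ?_⟩
    intro y
    rcases eq_or_ne (h y) ⊤ with hy | hy
    · rw [hy]; exact le_top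
    · have hym : h y = (((h y).toReal : ℝ) : EReal) := (EReal.coe_toReal hy (hcl.1 y)).symm
      have := hall y (h y).toReal (le_of_eq hym)
      rw [hym]
      show (((-(r⁻¹ • v)) y + u₀ / r : ℝ) : EReal) ≤ (((h y).toReal : ℝ) : EReal)
      rw [EReal.coe_le_coe_iff]
      simp only [ContinuousLinearMap.neg_apply, ContinuousLinearMap.smul_apply, smul_eq_mul]
      have h9 : (u₀ - v y) / r ≤ (h y).toReal := by
        rw [div_le_iff₀ hrpos]; nlinarith
      have heq2 : -(r⁻¹ * v y) + u₀ / r = (u₀ - v y) / r := by field_simp; ring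
      linarith
  obtain ⟨w0, c0, hw0⟩ := hmin
  -- Step 2: the best constant
  set S : Set ℝ := {d | ∀ x, aff w0 d x ≤ h x} with hS
  have hc0S : c0 ∈ S := hw0
  have hbdd : BddAbove S := by
    refine ⟨m - w0 x1, ?_⟩
    intro d hd
    have h1 := hd x1
    rw [hx1m] at h1
    simp only [aff] at h1
    have : w0 x1 + d ≤ m := by exact_mod_cast h1
    linarith
  set γ := sSup S with hγ
  have hγS : ∀ x, aff w0 γ x ≤ h x := by
    intro x
    rcases eq_or_ne (h x) ⊤ with hx | hx
    · rw [hx]; exact le_top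
    · have hxm : h x = (((h x).toReal : ℝ) : EReal) := (EReal.coe_toReal hx (hcl.1 x)).symm
      have hub : γ ≤ (h x).toReal - w0 x := by
        apply csSup_le ⟨c0, hc0S⟩
        intro d hd
        have h1 := hd x
        rw [hxm] at h1
        simp only [aff] at h1
        have : w0 x + d ≤ (h x).toReal := by exact_mod_cast h1
        linarith
      rw [hxm]
      show ((w0 x + γ : ℝ) : EReal) ≤ (((h x).toReal : ℝ) : EReal)
      exact_mod_cast (by linarith : w0 x + γ ≤ (h x).toReal)
  -- Step 3: h ≤ aff w0 γ
  have hle : ∀ x, h x ≤ aff w0 γ x := by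
    intro x
    by_contra hlt
    push_neg at hlt
    have hlt : ((w0 x + γ : ℝ) : EReal) < h x := hlt
    obtain ⟨t, ht1, ht2⟩ := EReal.exists_between_coe_real hlt
    have ht1' : w0 x + γ < t := by exact_mod_cast ht1
    obtain ⟨v, r, u₀, hr, hltF, hall⟩ := sep_epi h hcl x t ht2
    rcases hr.lt_or_eq with hrpos | hrzero
    · -- r > 0 : build a minorant that beats γ at x
      set w1 : X →L[ℝ] ℝ := -(r⁻¹ • v) with hw1
      set c1 : ℝ := u₀ / r with hc1
      have hmin1 : ∀ y, aff w1 c1 y ≤ h y := by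
        intro y
        rcases eq_or_ne (h y) ⊤ with hy | hy
        · rw [hy]; exact le_top
        · have hym : h y = (((h y).toReal : ℝ) : EReal) := (EReal.coe_toReal hy (hcl.1 y)).symm
          have := hall y (h y).toReal (le_of_eq hym)
          rw [hym]
          show ((w1 y + c1 : ℝ) : EReal) ≤ (((h y).toReal : ℝ) : EReal)
          rw [EReal.coe_le_coe_iff]
          simp only [hw1, hc1, ContinuousLinearMap.neg_apply,
            ContinuousLinearMap.smul_apply, smul_eq_mul]
          have h9 : (u₀ - v y) / r ≤ (h y).toReal := by
            rw [div_le_iff₀ hrpos]; nlinarith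
          have heq2 : -(r⁻¹ * v y) + u₀ / r = (u₀ - v y) / r := by field_simp; ring
          linarith
      have heq : w1 = w0 := hsl w1 w0 c1 γ hmin1 hγS
      have hc1S : c1 ∈ S := by
        intro y
        have := hmin1 y
        rwa [heq] at this
      have hc1γ : c1 ≤ γ := le_csSup hbdd hc1S
      have hxval : t < w1 x + c1 := by
        simp only [hw1, hc1, ContinuousLinearMap.neg_apply,
          ContinuousLinearMap.smul_apply, smul_eq_mul]
        have h9 : t < (u₀ - v x) / r := by
          rw [lt_div_iff₀ hrpos]; nlinarith
        have heq2 : -(r⁻¹ * v x) + u₀ / r = (u₀ - v x) / r := by field_simp; ring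
        linarith
      rw [heq] at hxval
      linarith
    · -- r = 0 : contradiction via a tilted minorant
      rw [← hrzero] at hltF hall
      simp only [zero_mul, add_zero] at hltF hall
      have hmin2 : ∀ y, aff (w0 - v) (c0 + u₀) y ≤ h y := by
        intro y
        rcases eq_or_ne (h y) ⊤ with hy | hy
        · rw [hy]; exact le_top
        · have hym : h y = (((h y).toReal : ℝ) : EReal) := (EReal.coe_toReal hy (hcl.1 y)).symm
          have h1 := hall y (h y).toReal (le_of_eq hym)
          have h2 := hw0 y
          rw [hym] at h2
          simp only [aff] at h2
          have h2' : w0 y + c0 ≤ (h y).toReal := by exact_mod_cast h2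
          rw [hym]
          show (((w0 - v) y + (c0 + u₀) : ℝ) : EReal) ≤ (((h y).toReal : ℝ) : EReal)
          rw [EReal.coe_le_coe_iff]
          simp only [ContinuousLinearMap.sub_apply]
          linarith
      have heq : w0 - v = w0 := hsl (w0 - v) w0 (c0 + u₀) c0 hmin2 hw0
      have hv0 : v = 0 := sub_eq_self.mp heq
      have h1 := hall x1 m (le_of_eq hx1m)
      rw [hv0] at h1 hltF
      simp at h1 hltF
      linarith
  exact ⟨w0, γ, funext fun x => le_antisymm (hle x) (hγS x)⟩

theorem fully_order_preserving_maps_affine_to_affine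
    [NormedAddCommGroup X] [NormedSpace ℝ X] [CompleteSpace X]
    (T : Cl X → Cl X) (hT : FullyOrderPreserving T)
    (u : X →L[ℝ] ℝ) (α : ℝ) :
    ∃ (v : X →L[ℝ] ℝ) (β : ℝ), (T (affCl u α)).1 = aff v β := by
  obtain ⟨hsurj, hord⟩ := hT
  set H := T (affCl u α) with hH
  have hsl : ∀ (w₁ w₂ : X →L[ℝ] ℝ) (d₁ d₂ : ℝ),
      (∀ x, aff w₁ d₁ x ≤ H.1 x) → (∀ x, aff w₂ d₂ x ≤ H.1 x) → w₁ = w₂ := by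
    intro w₁ w₂ d₁ d₂ h1 h2
    obtain ⟨p₁, hp₁⟩ := hsurj (affCl w₁ d₁)
    obtain ⟨p₂, hp₂⟩ := hsurj (affCl w₂ d₂)
    have hq₁ : p₁.1 ≤ (affCl u α).1 := (hord p₁ (affCl u α)).mpr (by rw [hp₁]; exact h1)
    have hq₂ : p₂.1 ≤ (affCl u α).1 := (hord p₂ (affCl u α)).mpr (by rw [hp₂]; exact h2)
    obtain ⟨c₁, hc₁⟩ := downset_affine u α p₁.1 p₁.2 fun x => hq₁ x
    obtain ⟨c₂, hc₂⟩ := downset_affine u α p₂.1 p₂.2 fun x => hq₂ x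
    rcases le_total c₁ c₂ with hc | hc
    · have hple : p₁.1 ≤ p₂.1 := by
        rw [hc₁, hc₂]
        intro x
        exact EReal.coe_le_coe_iff.mpr (by linarith)
      have h3 := (hord p₁ p₂).mp hple
      rw [hp₁, hp₂] at h3
      exact slope_eq_of_le w₁ w₂ d₁ d₂ (fun x => EReal.coe_le_coe_iff.mp (h3 x))
    · have hple : p₂.1 ≤ p₁.1 := by
        rw [hc₁, hc₂]
        intro x
        exact EReal.coe_le_coe_iff.mpr (by linarith)
      have h3 := (hord p₂ p₁).mp hple
      rw [hp₂, hp₁] at h3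
      exact (slope_eq_of_le w₂ w₁ d₂ d₁ (fun x => EReal.coe_le_coe_iff.mp (h3 x))).symm
  obtain ⟨v, β, hvβ⟩ := chain_affine H.1 H.2 hsl
  exact ⟨v, β, hvβ⟩
end
end

section
/- If T : C(X) → C(X) is fully order preserving and T(f) is a continuous affine function for some f ∈ C(X), then f is itself a continuous affine function. -/
open Set

noncomputable section

variable {X : Type*}

/-- A continuous linear functional bounded above is zero. -/
lemma linear_bdd_zero [NormedAddCommGroup X] [NormedSpace ℝ X] (w : X →L[ℝ] ℝ) (M : ℝ) (h : ∀ x, w x ≤ M) : w = 0 := by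
  have key : ∀ x : X, w x ≤ 0 := by
    intro x
    by_contra hx
    push_neg at hx
    obtain ⟨n, hn⟩ := exists_nat_gt (M / w x)
    have h2 := h ((n : ℝ) • x)
    rw [map_smul, smul_eq_mul] at h2
    have := (div_lt_iff₀ hx).mp hn
    linarith
  ext x
  have h1 := key x
  have h2 := key (-x)
  rw [map_neg] at h2
  simp only [ContinuousLinearMap.zero_apply]
  linarith

/-- Lemma A: any element of C(X) below a continuous affine function is affine
with the same slope. -/
lemma lowerset_aff [NormedAddCommGroup X] [NormedSpace ℝ X] {g : X → EReal} (hg : IsClFun X g) (v : X →L[ℝ] ℝ) (β : ℝ)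
    (hle : ∀ x, g x ≤ aff v β x) : ∃ γ : ℝ, g = aff v γ := by
  obtain ⟨hbot, -, -, hconv⟩ := hg
  have hfin : ∀ x, g x = ((g x).toReal : EReal) := by
    intro x
    refine (EReal.coe_toReal ?_ (hbot x)).symm
    exact ((hle x).trans_lt (EReal.coe_lt_top _)).ne
  -- θ x = (g x).toReal - (v x + β)
  have hθ0 : ∀ x, (g x).toReal - (v x + β) ≤ 0 := by
    intro x
    have := hle x
    rw [hfin x, aff, EReal.coe_le_coe_iff] at this
    linarith
  have hθconv : ∀ x y : X, ∀ a b : ℝ, 0 ≤ a → 0 ≤ b → a + b = 1 →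
      (g (a • x + b • y)).toReal - (v (a • x + b • y) + β) ≤
        a * ((g x).toReal - (v x + β)) + b * ((g y).toReal - (v y + β)) := by
    intro x y a b ha hb hab
    have key := hconv x y a b ha hb hab
    rw [hfin x, hfin y, hfin (a • x + b • y), ← EReal.coe_mul, ← EReal.coe_mul,
      ← EReal.coe_add, EReal.coe_le_coe_iff] at key
    have hβ : a * β + b * β = β := by rw [← add_mul, hab, one_mul]
    simp only [map_add, map_smul, smul_eq_mul]
    nlinarith [key, hβ]
  have hle0 : ∀ x, (g x).toReal - (v x + β) ≤ (g 0).toReal - (v 0 + β) := by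
    intro x
    by_contra hcon
    push_neg at hcon
    have hpos : 0 < ((g x).toReal - (v x + β)) - ((g 0).toReal - (v 0 + β)) := by linarith
    obtain ⟨n, hn⟩ := exists_nat_gt
      (max 1 ((-((g 0).toReal - (v 0 + β))) / (((g x).toReal - (v x + β)) - ((g 0).toReal - (v 0 + β)))))
    have hn1 : (1:ℝ) ≤ n := le_trans (le_max_left _ _) hn.le
    have hn' : (0:ℝ) < n := by linarith
    have h1 : (0:ℝ) ≤ 1 - 1/n := by
      rw [sub_nonneg, div_le_one hn']; exact hn1
    have h2 : (0:ℝ) ≤ 1/(n:ℝ) := by positivity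
    have h3 : (1 - 1/(n:ℝ)) + 1/n = 1 := by ring
    have h4 : (1 - 1/(n:ℝ)) • (0:X) + (1/(n:ℝ)) • ((n:ℝ) • x) = x := by
      rw [smul_zero, zero_add, smul_smul, one_div, inv_mul_cancel₀ (ne_of_gt hn'), one_smul]
    have hkey := hθconv 0 ((n:ℝ) • x) (1 - 1/n) (1/n) h1 h2 h3
    rw [h4] at hkey
    have h5 : (1/(n:ℝ)) * ((g ((n:ℝ) • x)).toReal - (v ((n:ℝ) • x) + β)) ≤ 0 :=
      mul_nonpos_of_nonneg_of_nonpos h2 (hθ0 _)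
    -- hkey : θ x ≤ (1 - 1/n) θ 0 + (1/n) θ (n x) ≤ θ 0 - θ 0 / n
    have hn2 : (-((g 0).toReal - (v 0 + β))) /
        (((g x).toReal - (v x + β)) - ((g 0).toReal - (v 0 + β))) < n :=
      lt_of_le_of_lt (le_max_right _ _) hn
    rw [div_lt_iff₀ hpos] at hn2
    have hexp : (1 - 1/(n:ℝ)) * ((g 0).toReal - (v 0 + β)) =
        ((g 0).toReal - (v 0 + β)) - ((g 0).toReal - (v 0 + β))/n := by ring
    have hfinal : ((g x).toReal - (v x + β)) - ((g 0).toReal - (v 0 + β)) ≤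
        (-((g 0).toReal - (v 0 + β)))/n := by
      rw [hexp] at hkey
      have : (-((g 0).toReal - (v 0 + β)))/n = -(((g 0).toReal - (v 0 + β))/n) := by ring
      linarith
    have h9 := (le_div_iff₀ hn').mp hfinal
    nlinarith [h9, hn2]
  have hge0 : ∀ x, (g 0).toReal - (v 0 + β) ≤ (g x).toReal - (v x + β) := by
    intro x
    have h4 : (1/2 : ℝ) • x + (1/2 : ℝ) • (-x) = (0:X) := by
      rw [smul_neg, add_neg_cancel]
    have hkey := hθconv x (-x) (1/2) (1/2) (by norm_num) (by norm_num) (by norm_num)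
    rw [h4] at hkey
    have h2 := hle0 (-x)
    linarith
  refine ⟨β + ((g 0).toReal - (v 0 + β)), ?_⟩
  funext x
  rw [hfin x, aff]
  have h1 : (g x).toReal = v x + (β + ((g 0).toReal - (v 0 + β))) := by
    have := hle0 x
    have := hge0 x
    linarith
  exact_mod_cast congrArg (fun r : ℝ => (r : EReal)) h1

lemma epi_closed' [NormedAddCommGroup X] {g : X → EReal} (hlsc : LowerSemicontinuous g) :
    IsClosed {p : X × ℝ | g p.1 ≤ (p.2 : EReal)} := by
  rw [← isOpen_compl_iff, isOpen_iff_mem_nhds]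
  rintro ⟨x, t⟩ hp
  simp only [mem_compl_iff, mem_setOf_eq, not_le] at hp
  obtain ⟨t', ht1, ht2⟩ := EReal.exists_between_coe_real hp
  have hU : {x' | (t' : EReal) < g x'} ∈ nhds x :=
    Filter.eventually_iff.mp (hlsc x _ ht2)
  rw [nhds_prod_eq]
  refine Filter.mem_of_superset
    (Filter.prod_mem_prod hU (Iio_mem_nhds (EReal.coe_lt_coe_iff.mp ht1))) ?_
  rintro ⟨x', s⟩ ⟨h1, h2⟩
  simp only [mem_compl_iff, mem_setOf_eq, not_le]
  exact lt_trans (EReal.coe_lt_coe_iff.mpr h2) h1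

lemma epi_convex' [NormedAddCommGroup X] [NormedSpace ℝ X] {g : X → EReal} (hg : IsClFun X g) :
    Convex ℝ {p : X × ℝ | g p.1 ≤ (p.2 : EReal)} := by
  rintro ⟨x, r⟩ hx ⟨y, t⟩ hy a b ha hb hab
  simp only [mem_setOf_eq] at hx hy
  have hx' : g x ≠ ⊤ := (hx.trans_lt (EReal.coe_lt_top r)).ne
  have hy' : g y ≠ ⊤ := (hy.trans_lt (EReal.coe_lt_top t)).ne
  have hgx : g x = ((g x).toReal : EReal) := (EReal.coe_toReal hx' (hg.1 x)).symm
  have hgy : g y = ((g y).toReal : EReal) := (EReal.coe_toReal hy' (hg.1 y)).symm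
  have hx2 : (g x).toReal ≤ r := by rw [hgx, EReal.coe_le_coe_iff] at hx; exact hx
  have hy2 : (g y).toReal ≤ t := by rw [hgy, EReal.coe_le_coe_iff] at hy; exact hy
  have key := hg.2.2.2 x y a b ha hb hab
  simp only [mem_setOf_eq, Prod.smul_mk, Prod.mk_add_mk, smul_eq_mul]
  calc g (a • x + b • y) ≤ (a : EReal) * g x + (b : EReal) * g y := key
    _ = ((a * (g x).toReal + b * (g y).toReal : ℝ) : EReal) := by
        rw [hgx, hgy, ← EReal.coe_mul, ← EReal.coe_mul, ← EReal.coe_add,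
          EReal.toReal_coe, EReal.toReal_coe]
    _ ≤ ((a * r + b * t : ℝ) : EReal) := by
        rw [EReal.coe_le_coe_iff]
        exact add_le_add (mul_le_mul_of_nonneg_left hx2 ha)
          (mul_le_mul_of_nonneg_left hy2 hb)

lemma sep_epi' [NormedAddCommGroup X] [NormedSpace ℝ X] {g : X → EReal} (hg : IsClFun X g)
    (x1 : X) (hx1 : g x1 ≠ ⊤) (x2 : X) (m2 : ℝ) (h2 : ¬ g x2 ≤ (m2 : EReal)) :
    ∃ (w : X →L[ℝ] ℝ) (c s : ℝ), c ≤ 0 ∧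
      (∀ x : X, g x ≠ ⊤ → w x + (g x).toReal * c < s) ∧ s < w x2 + m2 * c := by
  have hmem : ∀ x : X, ∀ r : ℝ, g x ≠ ⊤ → (g x).toReal ≤ r →
      (x, r) ∈ {p : X × ℝ | g p.1 ≤ (p.2 : EReal)} := by
    intro x r hx hr
    simp only [mem_setOf_eq]
    calc g x = ((g x).toReal : EReal) := (EReal.coe_toReal hx (hg.1 x)).symm
      _ ≤ (r : EReal) := EReal.coe_le_coe_iff.mpr hr
  obtain ⟨φ, s, hφ1, hφ2⟩ := geometric_hahn_banach_closed_point
    (epi_convex' hg) (epi_closed' hg.2.2.1) (by simpa only [mem_setOf_eq] using h2 :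
      ((x2, m2) : X × ℝ) ∉ {p : X × ℝ | g p.1 ≤ (p.2 : EReal)})
  set w : X →L[ℝ] ℝ := φ.comp (ContinuousLinearMap.inl ℝ X ℝ) with hw
  set c : ℝ := φ (0, 1) with hc
  have hdec : ∀ (x : X) (t : ℝ), φ (x, t) = w x + t * c := by
    intro x t
    have hsplit : ((x, t) : X × ℝ) = (x, 0) + t • ((0 : X), (1 : ℝ)) := by
      simp [Prod.ext_iff]
    rw [hsplit, map_add, map_smul, smul_eq_mul]
    rfl
  have hcle : c ≤ 0 := by
    by_contra hcpos
    push_neg at hcpos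
    obtain ⟨n, hn⟩ := exists_nat_gt ((s - w x1 - (g x1).toReal * c) / c)
    have hmem1 : ((x1, (g x1).toReal + n) : X × ℝ) ∈ {p : X × ℝ | g p.1 ≤ (p.2 : EReal)} :=
      hmem x1 _ hx1 (le_add_of_nonneg_right (by positivity))
    have h3 := hφ1 _ hmem1
    rw [hdec] at h3
    rw [div_lt_iff₀ hcpos] at hn
    nlinarith
  refine ⟨w, c, s, hcle, ?_, ?_⟩
  · intro x hx
    have h3 := hφ1 _ (hmem x _ hx le_rfl)
    rwa [hdec] at h3
  · rw [hdec] at hφ2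
    exact hφ2

theorem affine_image_implies_affine
    [NormedAddCommGroup X] [NormedSpace ℝ X] [CompleteSpace X]
    (T : Cl X → Cl X) (hT : FullyOrderPreserving T)
    (f : Cl X) (v : X →L[ℝ] ℝ) (β : ℝ)
    (hTf : (T f).1 = aff v β) :
    ∃ (u : X →L[ℝ] ℝ) (α : ℝ), f.1 = aff u α := by
  obtain ⟨-, hord⟩ := hT
  -- the lower set of f is totally ordered
  have chain : ∀ h₁ h₂ : Cl X, h₁.1 ≤ f.1 → h₂.1 ≤ f.1 → h₁.1 ≤ h₂.1 ∨ h₂.1 ≤ h₁.1 := by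
    intro h₁ h₂ d1 d2
    have e1 : ∀ x, (T h₁).1 x ≤ aff v β x := by
      have h := (hord h₁ f).1 d1; rw [hTf] at h; exact h
    have e2 : ∀ x, (T h₂).1 x ≤ aff v β x := by
      have h := (hord h₂ f).1 d2; rw [hTf] at h; exact h
    obtain ⟨γ1, hγ1⟩ := lowerset_aff (T h₁).2 v β e1
    obtain ⟨γ2, hγ2⟩ := lowerset_aff (T h₂).2 v β e2
    have haffle : ∀ γ γ' : ℝ, γ ≤ γ' → aff v γ ≤ aff v γ' := by
      intro γ γ' hγ x
      exact EReal.coe_le_coe_iff.mpr (by linarith)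
    rcases le_total γ1 γ2 with h | h
    · exact Or.inl ((hord h₁ h₂).2 (by rw [hγ1, hγ2]; exact haffle _ _ h))
    · exact Or.inr ((hord h₂ h₁).2 (by rw [hγ1, hγ2]; exact haffle _ _ h))
  -- all continuous affine minorants of f have the same slope
  have slopeEq : ∀ (u₁ : X →L[ℝ] ℝ) (a₁ : ℝ) (u₂ : X →L[ℝ] ℝ) (a₂ : ℝ),
      aff u₁ a₁ ≤ f.1 → aff u₂ a₂ ≤ f.1 → u₁ = u₂ := by
    have aux : ∀ (u₁ : X →L[ℝ] ℝ) (a₁ : ℝ) (u₂ : X →L[ℝ] ℝ) (a₂ : ℝ),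
        aff u₁ a₁ ≤ aff u₂ a₂ → u₁ = u₂ := by
      intro u₁ a₁ u₂ a₂ h
      have hb : ∀ x, (u₁ - u₂) x ≤ a₂ - a₁ := by
        intro x
        have h2 : ((u₁ x + a₁ : ℝ) : EReal) ≤ ((u₂ x + a₂ : ℝ) : EReal) := h x
        rw [EReal.coe_le_coe_iff] at h2
        simp only [ContinuousLinearMap.sub_apply]
        linarith
      exact sub_eq_zero.mp (linear_bdd_zero (u₁ - u₂) _ hb)
    intro u₁ a₁ u₂ a₂ d1 d2
    rcases chain (affCl u₁ a₁) (affCl u₂ a₂) d1 d2 with h | h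
    · exact aux _ _ _ _ h
    · exact (aux _ _ _ _ h).symm
  obtain ⟨x1, hx1⟩ := f.2.2.1
  have hbot := f.2.1
  have hffin : ∀ x, f.1 x ≠ ⊤ → f.1 x = ((f.1 x).toReal : EReal) :=
    fun x hx => (EReal.coe_toReal hx (hbot x)).symm
  -- from a separating functional with c < 0, produce an affine minorant
  have mkMin : ∀ (w : X →L[ℝ] ℝ) (c s : ℝ), c < 0 →
      (∀ x : X, f.1 x ≠ ⊤ → w x + (f.1 x).toReal * c < s) →
      aff ((-c⁻¹) • w) (s * c⁻¹) ≤ f.1 := by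
    intro w c s hc hlt x
    by_cases hx : f.1 x = ⊤
    · rw [hx]; exact le_top
    · have h3 := hlt x hx
      have h5 : (s - w x) / c < (f.1 x).toReal := by
        rw [div_lt_iff_of_neg hc]; linarith
      have h6 : -c⁻¹ * w x + s * c⁻¹ = (s - w x) / c := by
        ring
      have h7 : ((-c⁻¹) • w) x + s * c⁻¹ ≤ (f.1 x).toReal := by
        simp only [ContinuousLinearMap.smul_apply, smul_eq_mul]
        linarith
      calc aff ((-c⁻¹) • w) (s * c⁻¹) x ≤ (((f.1 x).toReal : ℝ) : EReal) :=
            EReal.coe_le_coe_iff.mpr h7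
        _ = f.1 x := (hffin x hx).symm
  -- base minorant
  obtain ⟨w0, c0, s0, hc0le, hlt0, hgt0⟩ := sep_epi' f.2 x1 hx1 x1 ((f.1 x1).toReal - 1)
    (by
      intro hle
      nth_rewrite 1 [hffin x1 hx1] at hle
      rw [EReal.coe_le_coe_iff] at hle
      linarith)
  have hc0 : c0 < 0 := by
    rcases lt_or_eq_of_le hc0le with h | h
    · exact h
    · exfalso
      have h1 := hlt0 x1 hx1
      rw [h] at h1 hgt0
      simp only [mul_zero, add_zero] at h1 hgt0
      linarith
  set u : X →L[ℝ] ℝ := (-c0⁻¹) • w0 with hu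
  set A : Set ℝ := {a : ℝ | aff u a ≤ f.1} with hA
  have hA0 : s0 * c0⁻¹ ∈ A := mkMin w0 c0 s0 hc0 hlt0
  have hAbdd : BddAbove A := by
    refine ⟨(f.1 x1).toReal - u x1, ?_⟩
    intro a ha
    have h2 : ((u x1 + a : ℝ) : EReal) ≤ f.1 x1 := ha x1
    rw [hffin x1 hx1, EReal.coe_le_coe_iff] at h2
    linarith
  set α : ℝ := sSup A with hα
  have hαA : aff u α ≤ f.1 := by
    intro x
    by_cases hx : f.1 x = ⊤
    · rw [hx]; exact le_top
    · have h2 : α ≤ (f.1 x).toReal - u x := by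
        refine csSup_le ⟨_, hA0⟩ ?_
        intro a ha
        have h3 : ((u x + a : ℝ) : EReal) ≤ f.1 x := ha x
        rw [hffin x hx, EReal.coe_le_coe_iff] at h3
        linarith
      calc aff u α x ≤ (((f.1 x).toReal : ℝ) : EReal) := EReal.coe_le_coe_iff.mpr (by linarith)
        _ = f.1 x := (hffin x hx).symm
  refine ⟨u, α, ?_⟩
  funext x
  refine le_antisymm ?_ (hαA x)
  by_contra hcon
  obtain ⟨w, c, s, hcle, hlt, hgt⟩ := sep_epi' f.2 x1 hx1 x (u x + α) hcon
  rcases lt_or_eq_of_le hcle with hc | hc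
  · -- c < 0 : new minorant contradicts sup
    have hmin := mkMin w c s hc hlt
    have hslope : (-c⁻¹) • w = u := slopeEq _ _ _ _ hmin hαA
    rw [hslope] at hmin
    have hmem : s * c⁻¹ ≤ α := le_csSup hAbdd hmin
    have h8 : (u x + α) * c > s - w x := by linarith
    have h9 : u x + α < (s - w x) / c := by
      rw [lt_div_iff_of_neg hc]; linarith
    have h10 : -c⁻¹ * w x + s * c⁻¹ = (s - w x) / c := by ring
    have h11 : u x = -c⁻¹ * w x := by
      rw [← hslope]; simp [smul_eq_mul]
    linarith
  · -- c = 0 : vertical separation, contradicts slope uniqueness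
    rw [hc] at hgt
    simp only [mul_zero, add_zero] at hgt
    have hltz : ∀ y : X, f.1 y ≠ ⊤ → w y < s := by
      intro y hy
      have := hlt y hy
      rw [hc] at this
      simpa using this
    have hmin : aff (u + w) (α - s) ≤ f.1 := by
      intro y
      by_cases hy : f.1 y = ⊤
      · rw [hy]; exact le_top
      · have h2 : ((u y + α : ℝ) : EReal) ≤ f.1 y := hαA y
        rw [hffin y hy, EReal.coe_le_coe_iff] at h2
        have h3 := hltz y hy
        calc aff (u + w) (α - s) y ≤ (((f.1 y).toReal : ℝ) : EReal) := by
              refine EReal.coe_le_coe_iff.mpr ?_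
              simp only [ContinuousLinearMap.add_apply]
              linarith
          _ = f.1 y := (hffin y hy).symm
    have hslope : u + w = u := slopeEq _ _ _ _ hmin hαA
    have hw0 : w = 0 := by
      have := hslope
      rwa [add_eq_left] at this
    have ha := hltz x1 hx1
    rw [hw0] at ha hgt
    simp only [ContinuousLinearMap.zero_apply, zero_add] at ha hgt
    linarith
end
end

section
/- If T : C(X) → C(X) is fully order preserving and one writes T(h_{u,α}) = h_{y(u,α), γ(u,α)} for the images of affine functions, then y(u,α) does not depend on α: y(u,α) = y(u,δ) for all α, δ ∈ ℝ. -/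
/-! A fully order preserving `T` is monotone, so `h_{u,α} ≤ h_{u,δ}` for `α ≤ δ` gives
`h_{y(u,α), γ(u,α)} ≤ h_{y(u,δ), γ(u,δ)}`. The difference `y(u,α) - y(u,δ)` of the linear parts is
then a linear functional bounded above, and the only such functional is zero. -/

open Set

noncomputable section

variable {X : Type*}

theorem LinearMap.eq_zero_of_forall_le_s7 {E : Type*} [AddCommGroup E] [Module ℝ E]
    (f : E →ₗ[ℝ] ℝ) (M : ℝ) (hf : ∀ x, f x ≤ M) : f = 0 := by
  ext x
  by_contra hx
  have h := hf (((M + 1) / f x) • x)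
  rw [map_smul, smul_eq_mul, div_mul_cancel₀ _ hx] at h
  linarith

theorem ContinuousLinearMap.eq_of_forall_add_le_add {E : Type*} [AddCommGroup E] [Module ℝ E]
    [TopologicalSpace E] {u v : E →L[ℝ] ℝ} {a b : ℝ} (h : ∀ x, u x + a ≤ v x + b) : u = v := by
  have hzero : ((u - v : E →L[ℝ] ℝ) : E →ₗ[ℝ] ℝ) = 0 :=
    LinearMap.eq_zero_of_forall_le_s7 _ (b - a) fun x => by
      simp only [ContinuousLinearMap.coe_coe, sub_apply]
      linarith [h x]
  exact sub_eq_zero.mp (ContinuousLinearMap.coe_injective hzero)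

section Affine

variable [NormedAddCommGroup X] [NormedSpace ℝ X]

theorem aff_le_aff_iff {u v : X →L[ℝ] ℝ} {α β : ℝ} :
    aff u α ≤ aff v β ↔ ∀ x, u x + α ≤ v x + β :=
  forall_congr' fun _ => EReal.coe_le_coe_iff

theorem aff_mono_right (u : X →L[ℝ] ℝ) {α δ : ℝ} (h : α ≤ δ) : aff u α ≤ aff u δ :=
  aff_le_aff_iff.mpr fun _ => by linarith

theorem FullyOrderPreserving.monotone {T : Cl X → Cl X} (hT : FullyOrderPreserving T)
    {f g : Cl X} (h : f.1 ≤ g.1) : (T f).1 ≤ (T g).1 :=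
  (hT.2 f g).mp h

end Affine

theorem linear_part_independent_of_constant_general
    [NormedAddCommGroup X] [NormedSpace ℝ X]
    (T : Cl X → Cl X) (hT : FullyOrderPreserving T)
    (y : (X →L[ℝ] ℝ) → ℝ → (X →L[ℝ] ℝ)) (γ : (X →L[ℝ] ℝ) → ℝ → ℝ)
    (hrep : ∀ (u : X →L[ℝ] ℝ) (α : ℝ), (T (affCl u α)).1 = aff (y u α) (γ u α)) :
    ∀ (u : X →L[ℝ] ℝ) (α δ : ℝ), y u α = y u δ := by
  have of_le : ∀ (u : X →L[ℝ] ℝ) (α δ : ℝ), α ≤ δ → y u α = y u δ := by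
    intro u α δ h
    have himage := hT.monotone (f := affCl u α) (g := affCl u δ) (aff_mono_right u h)
    rw [hrep, hrep] at himage
    exact ContinuousLinearMap.eq_of_forall_add_le_add (aff_le_aff_iff.mp himage)
  intro u α δ
  rcases le_total α δ with h | h
  · exact of_le u α δ h
  · exact (of_le u δ α h).symm

theorem linear_part_independent_of_constant
    [NormedAddCommGroup X] [NormedSpace ℝ X] [CompleteSpace X]
    (T : Cl X → Cl X) (hT : FullyOrderPreserving T)
    (y : (X →L[ℝ] ℝ) → ℝ → (X →L[ℝ] ℝ)) (γ : (X →L[ℝ] ℝ) → ℝ → ℝ)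
    (hrep : ∀ (u : X →L[ℝ] ℝ) (α : ℝ), (T (affCl u α)).1 = aff (y u α) (γ u α)) :
    ∀ (u : X →L[ℝ] ℝ) (α δ : ℝ), y u α = y u δ :=
  linear_part_independent_of_constant_general T hT y γ hrep
end
end

section
/- Let Z, Z' be real vector spaces with dim Z ≥ 2. If Q : Z → Z' is a bijection mapping segments onto segments, then Q is affine. -/
/-!
A segment-preserving bijection `Q` maps each segment `[a, b]` onto `[Q a, Q b]`: if an endpoint
of the image segment were `Q p` with `p` strictly inside `[a, b]`, the image of one of the halves
`[a, p]`, `[p, b]` would be the whole image segment. Hence `Q` preserves collinearity in both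
directions, maps lines onto lines and disjoint lines to disjoint lines. For `a, b, c`
non-collinear (such `c` exists as `dim Z ≥ 2`), the parallelogram `a, b, c, a + b - c` therefore
goes to the parallelogram on `Q a, Q b, Q c`, and the intersection of its diagonals shows that `Q`
preserves midpoints. So `Q - Q 0` is additive, hence `ℚ`-linear, and as it maps `[0, x]` into
`[0, Q x - Q 0]` it is monotone along rays, which upgrades `ℚ`-homogeneity to `ℝ`-homogeneity.
-/

open Set AffineMap

section AffineGeometry

variable {E : Type*} [AddCommGroup E] [Module ℝ E]

theorem collinear_iff_wbtw_or_wbtw_or_wbtw {x y z : E} :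
    Collinear ℝ ({x, y, z} : Set E) ↔ Wbtw ℝ x y z ∨ Wbtw ℝ y z x ∨ Wbtw ℝ z x y := by
  refine ⟨Collinear.wbtw_or_wbtw_or_wbtw, ?_⟩
  rintro (h | h | h)
  · exact h.collinear
  all_goals exact h.collinear.subset (by simp [Set.insert_subset_iff])

theorem mem_affineSpan_pair_iff_collinear {z p q : E} (hpq : p ≠ q) :
    z ∈ line[ℝ, p, q] ↔ Collinear ℝ ({z, p, q} : Set E) :=
  ⟨collinear_insert_of_mem_affineSpan_pair,
    fun h => h.mem_affineSpan_of_mem_of_ne (by simp) (by simp) (by simp) hpq⟩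

theorem exists_not_collinear_of_two_le_rank (hdim : 2 ≤ Module.rank ℝ E) {a b : E}
    (hab : a ≠ b) : ∃ c, ¬Collinear ℝ ({a, b, c} : Set E) := by
  by_contra! h
  have hline : line[ℝ, a, b] = ⊤ :=
    eq_top_iff.2 fun c _ => (h c).mem_affineSpan_of_mem_of_ne (by simp) (by simp) (by simp) hab
  have hspan : vectorSpan ℝ {a, b} = ⊤ := by
    rw [← direction_affineSpan, hline, AffineSubspace.direction_top]
  have hrank := collinear_pair ℝ a b
  rw [Collinear, hspan, rank_top] at hrank
  exact absurd (hdim.trans hrank) (by norm_num)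

theorem mem_segment_or_mem_segment {a b p x : E} (hp : p ∈ segment ℝ a b)
    (hx : x ∈ segment ℝ a b) : x ∈ segment ℝ a p ∨ x ∈ segment ℝ p b := by
  rw [segment_eq_image'] at hp hx
  obtain ⟨τ, hτ, rfl⟩ := hp
  obtain ⟨σ, hσ, rfl⟩ := hx
  rcases wbtw_or_wbtw_smul_vadd_of_nonneg a (b - a) hσ.1 hτ.1 with h | h
  · left
    rw [mem_segment_iff_wbtw]
    simpa only [vadd_eq_add, add_comm] using h
  · right
    rw [mem_segment_iff_wbtw]
    refine Wbtw.trans_left_right (w := a) ?_ (by simpa only [vadd_eq_add, add_comm] using h)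
    rw [← mem_segment_iff_wbtw, segment_eq_image']
    exact ⟨σ, hσ, rfl⟩

theorem mem_affineSpan_pair_of_smul_sub_add_smul_sub_eq_zero {a b c : E} {μ ν : ℝ} (hμ : μ ≠ 0)
    (h : μ • (b - a) + ν • (c - a) = 0) : b ∈ line[ℝ, a, c] := by
  refine mem_affineSpan_pair_iff_exists_lineMap_eq.2 ⟨-ν / μ, smul_right_injective E hμ ?_⟩
  simp only [lineMap_apply_module, smul_add, smul_smul, mul_sub, mul_one, mul_div_cancel₀ _ hμ]
  linear_combination (norm := module) -h

theorem eq_zero_and_eq_zero_of_not_collinear {a b c : E} (h : ¬Collinear ℝ ({a, b, c} : Set E))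
    {μ ν : ℝ} (hμν : μ • (b - a) + ν • (c - a) = 0) : μ = 0 ∧ ν = 0 := by
  by_contra hne
  apply h
  rcases not_and_or.1 hne with hμ | hν
  · have hb := mem_affineSpan_pair_of_smul_sub_add_smul_sub_eq_zero hμ hμν
    exact (collinear_insert_of_mem_affineSpan_pair hb).subset (by simp [Set.insert_subset_iff])
  · have hc := mem_affineSpan_pair_of_smul_sub_add_smul_sub_eq_zero hν ((add_comm _ _).trans hμν)
    exact (collinear_insert_of_mem_affineSpan_pair hc).subset (by simp [Set.insert_subset_iff])

theorem disjoint_affineSpan_pair_of_not_collinear {a b c : E}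
    (h : ¬Collinear ℝ ({a, b, c} : Set E)) :
    Disjoint (line[ℝ, a, c] : Set E) line[ℝ, b, a + b - c] := by
  refine Set.disjoint_left.2 fun z hz₁ hz₂ => ?_
  obtain ⟨s, rfl⟩ := mem_affineSpan_pair_iff_exists_lineMap_eq.1 hz₁
  obtain ⟨t, ht⟩ := mem_affineSpan_pair_iff_exists_lineMap_eq.1 hz₂
  rw [lineMap_apply_module, lineMap_apply_module] at ht
  have := eq_zero_and_eq_zero_of_not_collinear h (μ := 1) (ν := -(s + t))
    (by linear_combination (norm := module) ht)
  exact one_ne_zero this.1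

theorem eq_add_sub_of_disjoint_affineSpan_pair {a b c m d : E} (hm : m ∈ line[ℝ, a, b])
    (hd : d ∈ line[ℝ, c, m]) (h₁ : Disjoint (line[ℝ, a, c] : Set E) line[ℝ, b, d])
    (h₂ : Disjoint (line[ℝ, b, c] : Set E) line[ℝ, a, d]) : d = a + b - c := by
  obtain ⟨r, rfl⟩ := mem_affineSpan_pair_iff_exists_lineMap_eq.1 hm
  obtain ⟨u, rfl⟩ := mem_affineSpan_pair_iff_exists_lineMap_eq.1 hd
  -- `d = a + (u * r) • (b - a) + (1 - u) • (c - a)`: the lines `a c` and `b d` meet unless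
  -- `u * r = 1`, and the lines `b c` and `a d` meet unless `u = 2`.
  have hur : u * r = 1 := by
    by_contra hur
    have hne : 1 - u * r ≠ 0 := sub_ne_zero.2 (Ne.symm hur)
    refine Set.disjoint_left.1 h₁ (lineMap_mem_affineSpan_pair ((1 - u) / (1 - u * r)) a c) ?_
    rw [show lineMap a c ((1 - u) / (1 - u * r)) = lineMap b (lineMap c (lineMap a b r) u)
        (1 / (1 - u * r)) by simp only [lineMap_apply_module]; match_scalars <;> field_simp <;> ring]
    exact lineMap_mem_affineSpan_pair _ _ _
  have hu : u = 2 := by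
    by_contra hu
    have hne : 2 - u ≠ 0 := sub_ne_zero.2 (Ne.symm hu)
    refine Set.disjoint_left.1 h₂ (lineMap_mem_affineSpan_pair ((1 - u) / (2 - u)) b c) ?_
    rw [show lineMap b c ((1 - u) / (2 - u)) = lineMap a (lineMap c (lineMap a b r) u)
        (1 / (2 - u)) by simp only [lineMap_apply_module]; match_scalars <;> field_simp <;> linarith]
    exact lineMap_mem_affineSpan_pair _ _ _
  subst hu
  simp only [lineMap_apply_module]
  match_scalars <;> linarith

theorem eq_midpoint_of_mem_affineSpan_pair {a b c y : E} (h : ¬Collinear ℝ ({a, b, c} : Set E))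
    (h₁ : y ∈ line[ℝ, a, b]) (h₂ : y ∈ line[ℝ, c, a + b - c]) : y = midpoint ℝ a b := by
  obtain ⟨t, rfl⟩ := mem_affineSpan_pair_iff_exists_lineMap_eq.1 h₁
  obtain ⟨s, hs⟩ := mem_affineSpan_pair_iff_exists_lineMap_eq.1 h₂
  rw [lineMap_apply_module, lineMap_apply_module] at hs
  obtain ⟨hst, hs₂⟩ := eq_zero_and_eq_zero_of_not_collinear h (μ := s - t) (ν := 1 - 2 * s)
    (by linear_combination (norm := module) hs)
  rw [midpoint, show t = ⅟2 by norm_num; linarith]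

end AffineGeometry

section SegmentPreserving

variable {E F : Type*} [AddCommGroup E] [Module ℝ E] [AddCommGroup F] [Module ℝ F] {Q : E → F}

theorem eq_or_eq_of_image_segment_eq (hQ : Function.Injective Q)
    (hseg : ∀ z₁ z₂ : E, ∃ w₁ w₂ : F, Q '' segment ℝ z₁ z₂ = segment ℝ w₁ w₂)
    {a b : E} {w₁ w₂ : F} (h : Q '' segment ℝ a b = segment ℝ w₁ w₂) :
    w₁ = Q a ∨ w₁ = Q b := by
  obtain ⟨p, hp, rfl⟩ : w₁ ∈ Q '' segment ℝ a b := h ▸ left_mem_segment ℝ w₁ w₂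
  obtain ⟨x, hx, rfl⟩ : w₂ ∈ Q '' segment ℝ a b := h ▸ right_mem_segment ℝ _ w₂
  -- `Q '' [c, p]` is a segment containing both endpoints `Q p`, `Q x` of `Q '' [c, d]`.
  have hp_eq : ∀ c d, segment ℝ c d = segment ℝ a b → x ∈ segment ℝ c p → Q p = Q d := by
    intro c d hcd hxc
    obtain ⟨u₁, u₂, hu⟩ := hseg c p
    have hsub : Q '' segment ℝ c d ⊆ Q '' segment ℝ c p := by
      rw [hcd, h, hu]
      exact (convex_segment u₁ u₂).segment_subset
        (hu ▸ mem_image_of_mem Q (right_mem_segment ℝ c p)) (hu ▸ mem_image_of_mem Q hxc)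
    have hd : d ∈ segment ℝ c p :=
      hQ.mem_set_image.1 (hsub (mem_image_of_mem Q (right_mem_segment ℝ c d)))
    rw [(wbtw_swap_right_iff ℝ c).1
      ⟨mem_segment_iff_wbtw.1 (hcd ▸ hp), mem_segment_iff_wbtw.1 hd⟩]
  rcases mem_segment_or_mem_segment hp hx with hx' | hx'
  · exact Or.inr (hp_eq a b rfl hx')
  · exact Or.inl (hp_eq b a (segment_symm ℝ b a) (segment_symm ℝ p b ▸ hx'))

theorem image_segment_eq_segment (hQ : Function.Injective Q)
    (hseg : ∀ z₁ z₂ : E, ∃ w₁ w₂ : F, Q '' segment ℝ z₁ z₂ = segment ℝ w₁ w₂) (a b : E) :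
    Q '' segment ℝ a b = segment ℝ (Q a) (Q b) := by
  obtain ⟨w₁, w₂, h⟩ := hseg a b
  have h' : Q '' segment ℝ a b = segment ℝ w₂ w₁ := h.trans (segment_symm ℝ w₁ w₂)
  have ha : Q a ∈ segment ℝ w₁ w₂ := h ▸ mem_image_of_mem Q (left_mem_segment ℝ a b)
  have hb : Q b ∈ segment ℝ w₁ w₂ := h ▸ mem_image_of_mem Q (right_mem_segment ℝ a b)
  rcases eq_or_eq_of_image_segment_eq hQ hseg h with rfl | rfl <;>
    rcases eq_or_eq_of_image_segment_eq hQ hseg h' with rfl | rfl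
  · rw [segment_same, mem_singleton_iff] at hb
    rw [h, hb]
  · exact h
  · exact h'
  · rw [segment_same, mem_singleton_iff] at ha
    rw [h, ha]

theorem mem_segment_iff_map_mem_segment (hQ : Function.Injective Q)
    (hseg : ∀ z₁ z₂ : E, ∃ w₁ w₂ : F, Q '' segment ℝ z₁ z₂ = segment ℝ w₁ w₂) {a b x : E} :
    x ∈ segment ℝ a b ↔ Q x ∈ segment ℝ (Q a) (Q b) := by
  rw [← image_segment_eq_segment hQ hseg, hQ.mem_set_image]

theorem collinear_iff_map_collinear (hQ : Function.Injective Q)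
    (hseg : ∀ z₁ z₂ : E, ∃ w₁ w₂ : F, Q '' segment ℝ z₁ z₂ = segment ℝ w₁ w₂) {a b c : E} :
    Collinear ℝ ({a, b, c} : Set E) ↔ Collinear ℝ ({Q a, Q b, Q c} : Set F) := by
  simp only [collinear_iff_wbtw_or_wbtw_or_wbtw, ← mem_segment_iff_wbtw,
    mem_segment_iff_map_mem_segment hQ hseg]

theorem image_affineSpan_pair_eq (hQ : Function.Bijective Q)
    (hseg : ∀ z₁ z₂ : E, ∃ w₁ w₂ : F, Q '' segment ℝ z₁ z₂ = segment ℝ w₁ w₂) (p q : E) :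
    Q '' line[ℝ, p, q] = line[ℝ, Q p, Q q] := by
  rcases eq_or_ne p q with rfl | hpq
  · simp
  ext w
  obtain ⟨z, rfl⟩ := hQ.2 w
  rw [hQ.1.mem_set_image, SetLike.mem_coe, SetLike.mem_coe,
    mem_affineSpan_pair_iff_collinear hpq, mem_affineSpan_pair_iff_collinear (hQ.1.ne hpq),
    collinear_iff_map_collinear hQ.1 hseg]

theorem map_mem_affineSpan_pair (hQ : Function.Bijective Q)
    (hseg : ∀ z₁ z₂ : E, ∃ w₁ w₂ : F, Q '' segment ℝ z₁ z₂ = segment ℝ w₁ w₂) {z p q : E}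
    (hz : z ∈ line[ℝ, p, q]) : Q z ∈ line[ℝ, Q p, Q q] := by
  rw [← SetLike.mem_coe, ← image_affineSpan_pair_eq hQ hseg]
  exact mem_image_of_mem Q hz

theorem map_add_sub_of_not_collinear (hQ : Function.Bijective Q)
    (hseg : ∀ z₁ z₂ : E, ∃ w₁ w₂ : F, Q '' segment ℝ z₁ z₂ = segment ℝ w₁ w₂) {a b c : E}
    (h : ¬Collinear ℝ ({a, b, c} : Set E)) : Q (a + b - c) = Q a + Q b - Q c := by
  have hmap {z p q : E} (hz : z ∈ line[ℝ, p, q]) : Q z ∈ line[ℝ, Q p, Q q] :=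
    map_mem_affineSpan_pair hQ hseg hz
  have hdisj : ∀ {p q r s : E}, Disjoint (line[ℝ, p, q] : Set E) line[ℝ, r, s] →
      Disjoint (line[ℝ, Q p, Q q] : Set F) line[ℝ, Q r, Q s] := fun hd => by
    rw [← image_affineSpan_pair_eq hQ hseg, ← image_affineSpan_pair_eq hQ hseg]
    exact (disjoint_image_iff hQ.1).2 hd
  have h' : ¬Collinear ℝ ({b, a, c} : Set E) := by rwa [Set.insert_comm]
  refine eq_add_sub_of_disjoint_affineSpan_pair
    (hmap (lineMap_mem_affineSpan_pair (1 / 2 : ℝ) a b)) (hmap ?_)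
    (hdisj (disjoint_affineSpan_pair_of_not_collinear h)) ?_
  · convert lineMap_mem_affineSpan_pair (2 : ℝ) c _ using 1
    simp only [lineMap_apply_module]
    module
  · simpa only [add_comm b a] using hdisj (disjoint_affineSpan_pair_of_not_collinear h')

theorem map_midpoint_of_two_le_rank (hdim : 2 ≤ Module.rank ℝ E) (hQ : Function.Bijective Q)
    (hseg : ∀ z₁ z₂ : E, ∃ w₁ w₂ : F, Q '' segment ℝ z₁ z₂ = segment ℝ w₁ w₂) (a b : E) :
    Q (midpoint ℝ a b) = midpoint ℝ (Q a) (Q b) := by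
  rcases eq_or_ne a b with rfl | hab
  · simp
  obtain ⟨c, hc⟩ := exists_not_collinear_of_two_le_rank hdim hab
  have hmap {z p q : E} (hz : z ∈ line[ℝ, p, q]) : Q z ∈ line[ℝ, Q p, Q q] :=
    map_mem_affineSpan_pair hQ hseg hz
  refine eq_midpoint_of_mem_affineSpan_pair ((collinear_iff_map_collinear hQ.1 hseg).not.1 hc)
    (hmap (lineMap_mem_affineSpan_pair _ a b)) ?_
  rw [← map_add_sub_of_not_collinear hQ hseg hc]
  refine hmap ?_
  convert lineMap_mem_affineSpan_pair (⅟2 : ℝ) c (a + b - c) using 1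
  simp only [midpoint, lineMap_apply_module, invOf_eq_inv]
  module

end SegmentPreserving

section MidpointMaps

variable {E F : Type*} [AddCommGroup E] [Module ℝ E] [AddCommGroup F] [Module ℝ F]

theorem AddMonoidHom.map_smul_of_mapsTo_segment (g : E →+ F)
    (hg : ∀ x, MapsTo g (segment ℝ 0 x) (segment ℝ 0 (g x))) {t : ℝ} (ht₀ : 0 ≤ t)
    (ht₁ : t ≤ 1) (x : E) : g (t • x) = t • g x := by
  have hcoeff : ∀ s : ℝ, 0 ≤ s → s ≤ 1 → ∃ v : ℝ, 0 ≤ v ∧ v ≤ 1 ∧ g (s • x) = v • g x := by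
    intro s hs₀ hs₁
    have hs : s • x ∈ segment ℝ 0 x := by
      rw [segment_eq_image']
      exact ⟨s, ⟨hs₀, hs₁⟩, by simp⟩
    obtain ⟨v, hv, hgv⟩ := by simpa only [segment_eq_image', zero_add, sub_zero] using hg x hs
    exact ⟨v, hv.1, hv.2, hgv.symm⟩
  obtain ⟨v, hv₀, hv₁, hv⟩ := hcoeff t ht₀ ht₁
  rcases eq_or_ne (g x) 0 with hx | hx
  · rw [hv, hx, smul_zero, smul_zero]
  -- The coefficient of `g (s • x)` along `g x` is monotone in `s` and equals `s` at rationals.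
  have hmono : ∀ s s' v v' : ℝ, 0 ≤ s → s ≤ s' → s' ≤ 1 → g (s • x) = v • g x →
      g (s' • x) = v' • g x → v ≤ v' := by
    intro s s' v v' hs hss' hs' hgs hgs'
    obtain ⟨w, hw, -, hgw⟩ := hcoeff (s' - s) (by linarith) (by linarith)
    have hsplit : v' • g x = (v + w) • g x := by
      rw [← hgs', add_smul, ← hgs, ← hgw, ← map_add, ← add_smul, add_sub_cancel]
    linarith [smul_left_injective ℝ hx hsplit]
  have hrat (q : ℚ) : g ((q : ℝ) • x) = (q : ℝ) • g x := map_ratCast_smul g ℝ ℝ q x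
  rw [hv]
  congr 1
  apply le_antisymm
  · by_contra! htv
    obtain ⟨q, htq, hqv⟩ := exists_rat_btwn htv
    linarith [hmono t q v q ht₀ htq.le (by linarith) hv (hrat q)]
  · by_contra! hvt
    obtain ⟨q, hvq, hqt⟩ := exists_rat_btwn hvt
    linarith [hmono q t q v (by linarith) hqt.le ht₁ (hrat q) hv]

theorem map_smul_add_one_sub_smul_of_map_midpoint {f : E → F}
    (hmid : ∀ x y, f (midpoint ℝ x y) = midpoint ℝ (f x) (f y))
    (hseg : ∀ x y, MapsTo f (segment ℝ x y) (segment ℝ (f x) (f y)))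
    (x y : E) {s : ℝ} (hs₀ : 0 ≤ s) (hs₁ : s ≤ 1) :
    f (s • x + (1 - s) • y) = s • f x + (1 - s) • f y := by
  let g : E →+ F := AddMonoidHom.ofMapMidpoint ℝ ℝ (fun x => f x - f 0) (sub_self _) fun x y => by
    rw [hmid]
    simp only [midpoint_eq_smul_add, invOf_eq_inv]
    module
  have hg : ∀ x, MapsTo g (segment ℝ 0 x) (segment ℝ 0 (g x)) := fun x z hz => by
    rw [← mem_segment_translate ℝ (f 0)]
    simpa [g] using hseg 0 x hz
  have hgf : ∀ z, f z = g z + f 0 := fun z => (sub_add_cancel _ _).symm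
  rw [hgf, map_add, g.map_smul_of_mapsTo_segment hg hs₀ hs₁,
    g.map_smul_of_mapsTo_segment hg (sub_nonneg.2 hs₁) (sub_le_self 1 hs₀), hgf x, hgf y]
  module

end MidpointMaps

theorem segment_preserving_bijection_affine
    {Z Z' : Type*} [AddCommGroup Z] [Module ℝ Z] [AddCommGroup Z'] [Module ℝ Z']
    (hdim : 2 ≤ Module.rank ℝ Z)
    (Q : Z → Z') (hQ : Function.Bijective Q)
    (hseg : ∀ z₁ z₂ : Z, ∃ w₁ w₂ : Z', Q '' segment ℝ z₁ z₂ = segment ℝ w₁ w₂) :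
    ∀ (z₁ z₂ : Z) (s : ℝ), 0 ≤ s → s ≤ 1 →
      Q (s • z₁ + (1 - s) • z₂) = s • Q z₁ + (1 - s) • Q z₂ := fun z₁ z₂ _ hs₀ hs₁ =>
  map_smul_add_one_sub_smul_of_map_midpoint (map_midpoint_of_two_le_rank hdim hQ hseg)
    (fun _ _ _ hz => (mem_segment_iff_map_mem_segment hQ.1 hseg).1 hz) z₁ z₂ hs₀ hs₁
end

section
/- Let X be a real Banach space with dim X ≥ 2 and let M : X* → X* be a bijection such that for every x ∈ X both u ↦ ⟨M(u), x⟩ and u ↦ ⟨M⁻¹(u), x⟩ are quasiconvex on X*. Then M is affine. -/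
open Set

noncomputable section

variable {X : Type*}

/-- A real-valued function on the dual is quasiconvex. -/
def QCvx [NormedAddCommGroup X] [NormedSpace ℝ X] (φ : (X →L[ℝ] ℝ) → ℝ) : Prop :=
  ∀ u v : X →L[ℝ] ℝ, ∀ s : ℝ, 0 ≤ s → s ≤ 1 →
    φ (s • u + (1 - s) • v) ≤ max (φ u) (φ v)

/-!
Testing the quasiconvexity of `u ↦ ⟨M u, x⟩` at both `x` and `-x` shows that `⟨M w, x⟩` lies
between `⟨M u, x⟩` and `⟨M v, x⟩` whenever `w ∈ [u, v]`. Hence `M w - M u` and `M v - M w` lie on a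
common ray: `M`, and likewise `g`, preserves betweenness and therefore lines.
As `dim X* ≥ 2`, the midpoint of `u, v` is also the midpoint of the other diagonal of a
parallelogram `u, w, v, u + v - w`; since lines are preserved in both directions, `M` maps this
parallelogram to a parallelogram and hence preserves midpoints. Finally, if `M` sends the point
with parameter `t` on `[u, v]` to the point with parameter `f t` on `[M u, M v]`, then `f t - t`
is bounded and doubles under `t ↦ 2t mod 1`, so it vanishes.
-/

open AffineMap Function

theorem eqOn_id_of_map_midpoint {f : ℝ → ℝ} (h0 : f 0 = 0) (h1 : f 1 = 1)
    (hf : MapsTo f (Icc 0 1) (Icc 0 1))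
    (hmid : ∀ s ∈ Icc (0 : ℝ) 1, ∀ t ∈ Icc (0 : ℝ) 1, f ((s + t) / 2) = (f s + f t) / 2) :
    EqOn f id (Icc 0 1) := by
  have hdefect : ∀ n : ℕ, ∀ t ∈ Icc (0 : ℝ) 1, 2 ^ n * |f t - t| ≤ 1 := by
    intro n
    induction n with
    | zero =>
      intro t ht
      have := hf ht
      simp only [mem_Icc] at ht this
      rw [pow_zero, one_mul, abs_le]
      constructor <;> linarith
    | succ n ih =>
      rintro t ⟨ht0, ht1⟩
      -- `t` is the midpoint of `0` and `2t`, or of `2t - 1` and `1`, and the defect doubles there.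
      obtain ⟨s, hs, hdouble⟩ : ∃ s ∈ Icc (0 : ℝ) 1, f s - s = 2 * (f t - t) := by
        rcases le_total t (1 / 2) with ht | ht
        · have h := hmid 0 (by simp) (2 * t) ⟨by linarith, by linarith⟩
          rw [zero_add, mul_div_cancel_left₀ t two_ne_zero, h0] at h
          exact ⟨2 * t, ⟨by linarith, by linarith⟩, by rw [h]; ring⟩
        · have h := hmid (2 * t - 1) ⟨by linarith, by linarith⟩ 1 (by simp)
          rw [show (2 * t - 1 + 1) / 2 = t by ring, h1] at h
          exact ⟨2 * t - 1, ⟨by linarith, by linarith⟩, by rw [h]; ring⟩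
      calc 2 ^ (n + 1) * |f t - t| = 2 ^ n * |f s - s| := by
            rw [hdouble, abs_mul, abs_two, pow_succ, mul_assoc]
        _ ≤ 1 := ih s hs
  intro t ht
  by_contra hne
  have hpos : 0 < |f t - t| := abs_pos.mpr (sub_ne_zero.mpr hne)
  obtain ⟨n, hn⟩ := pow_unbounded_of_one_lt (1 / |f t - t|) one_lt_two
  have := hdefect n t ht
  rw [div_lt_iff₀ hpos] at hn
  linarith

variable {V W : Type*} [AddCommGroup V] [Module ℝ V] [AddCommGroup W] [Module ℝ W]

theorem mem_line_iff {a b p : V} : p ∈ line[ℝ, a, b] ↔ ∃ r : ℝ, p = (1 - r) • a + r • b := by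
  simp only [mem_affineSpan_pair_iff_exists_lineMap_eq, lineMap_apply_module, eq_comm]

theorem exists_notMem_line (hV : 1 < Module.rank ℝ V) (u v : V) : ∃ w, w ∉ line[ℝ, u, v] := by
  by_contra! h
  refine hV.not_ge (rank_le_one_iff.mpr ⟨v - u, fun w => ?_⟩)
  obtain ⟨r, hr⟩ := mem_line_iff.mp (h (w + u))
  exact ⟨r, by linear_combination (norm := module) -hr⟩

theorem disjoint_line_line_add_sub {u v w : V} (huv : u ≠ v) (hw : w ∉ line[ℝ, u, v]) :
    Disjoint (line[ℝ, u, w] : Set V) line[ℝ, v, u + v - w] := by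
  refine Set.disjoint_left.mpr fun z hz hz' => ?_
  obtain ⟨r, rfl⟩ := mem_line_iff.mp hz
  obtain ⟨r', hr'⟩ := mem_line_iff.mp hz'
  have h : v - u = (r + r') • (w - u) := by linear_combination (norm := module) -hr'
  rcases eq_or_ne (r + r') 0 with h0 | h0
  · rw [h0, zero_smul, sub_eq_zero] at h
    exact huv h.symm
  · refine hw (mem_line_iff.mpr ⟨(r + r')⁻¹, ?_⟩)
    have hw' : w - u = (r + r')⁻¹ • (v - u) := by rw [h, inv_smul_smul₀ h0]
    linear_combination (norm := module) hw'

theorem eq_one_of_disjoint_line {a b c d : V} {α β γ : ℝ} (hs : α + β + γ = 1)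
    (hd : d = α • a + β • b + γ • c) (h : Disjoint (line[ℝ, a, c] : Set V) line[ℝ, b, d]) :
    β = 1 := by
  by_contra hβ
  have hβ' : 1 - β ≠ 0 := sub_ne_zero.mpr (Ne.symm hβ)
  -- Otherwise both lines pass through `(α • a + γ • c) / (1 - β)`.
  refine Set.disjoint_left.mp h (mem_line_iff.mpr ⟨γ / (1 - β), rfl⟩)
    (mem_line_iff.mpr ⟨(1 - β)⁻¹, ?_⟩)
  rw [hd]
  match_scalars <;> field_simp <;> linarith

theorem exists_eq_affineCombination_of_mem_line {a b c p q d : V} (hp : p ∈ line[ℝ, c, a])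
    (hq : q ∈ line[ℝ, c, b]) (hd : d ∈ line[ℝ, p, q]) :
    ∃ α β γ : ℝ, α + β + γ = 1 ∧ d = α • a + β • b + γ • c := by
  obtain ⟨ρ, rfl⟩ := mem_line_iff.mp hp
  obtain ⟨σ, rfl⟩ := mem_line_iff.mp hq
  obtain ⟨τ, rfl⟩ := mem_line_iff.mp hd
  exact ⟨(1 - τ) * ρ, τ * σ, (1 - τ) * (1 - ρ) + τ * (1 - σ), by ring, by module⟩

theorem eq_midpoint_of_mem_line_of_mem_line {a b c z : V} (hc : c ∉ line[ℝ, a, b])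
    (hz : z ∈ line[ℝ, a, b]) (hz' : z ∈ line[ℝ, c, a + b - c]) : z = midpoint ℝ a b := by
  obtain ⟨α, rfl⟩ := mem_line_iff.mp hz
  obtain ⟨β, hβ⟩ := mem_line_iff.mp hz'
  have hβ2 : β = 1 / 2 := by
    by_contra hne
    have h2 : 1 - 2 * β ≠ 0 := fun h => hne (by linarith)
    have h : (1 - 2 * β) • c = (1 - α - β) • a + (α - β) • b := by
      linear_combination (norm := module) -hβ
    refine hc (mem_line_iff.mpr ⟨(α - β) / (1 - 2 * β), ?_⟩)
    rw [← inv_smul_smul₀ h2 c, h]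
    match_scalars <;> field_simp
    ring
  rw [hβ, hβ2, midpoint_eq_smul_add, invOf_eq_inv]
  module

def PreservesWbtw (F : V → W) : Prop :=
  ∀ ⦃a b c : V⦄, Wbtw ℝ a b c → Wbtw ℝ (F a) (F b) (F c)

namespace PreservesWbtw

variable {F : V → W}

theorem collinear (hF : PreservesWbtw F) {a b c : V} (h : Collinear ℝ {a, b, c}) :
    Collinear ℝ {F a, F b, F c} := by
  rcases h.wbtw_or_wbtw_or_wbtw with h | h | h
  · exact (hF h).collinear
  · rw [insert_comm, pair_comm]
    exact (hF h).collinear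
  · rw [pair_comm, insert_comm]
    exact (hF h).collinear

theorem mem_line (hF : PreservesWbtw F) {a b p : V} (hab : F a ≠ F b)
    (hp : p ∈ line[ℝ, a, b]) : F p ∈ line[ℝ, F a, F b] :=
  (hF.collinear (collinear_insert_of_mem_affineSpan_pair hp)).mem_affineSpan_of_mem_of_ne
    (by simp) (by simp) (by simp) hab

theorem map_lineMap (hF : PreservesWbtw F)
    (hmid : ∀ u v, F (midpoint ℝ u v) = midpoint ℝ (F u) (F v)) (u v : V) {t : ℝ}
    (ht : t ∈ Icc 0 1) : F (lineMap u v t) = lineMap (F u) (F v) t := by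
  have hseg : ∀ t ∈ Icc (0 : ℝ) 1, ∃ s ∈ Icc (0 : ℝ) 1,
      lineMap (F u) (F v) s = F (lineMap u v t) := fun t ht => hF ⟨t, ht, rfl⟩
  rcases eq_or_ne (F u) (F v) with huv | huv
  · obtain ⟨s, -, hs⟩ := hseg t ht
    rw [← hs, huv, lineMap_same_apply, lineMap_same_apply]
  choose! f hf hfF using hseg
  have hinj := lineMap_injective ℝ huv
  have hline_midpoint : ∀ s t : ℝ,
      midpoint ℝ (lineMap u v s) (lineMap u v t) = lineMap u v ((s + t) / 2) := by
    intro s t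
    simp only [midpoint_eq_smul_add, invOf_eq_inv, lineMap_apply_module]
    module
  have hf_id := eqOn_id_of_map_midpoint (f := f) (hinj ?_) (hinj ?_) hf (fun s hs t ht => hinj ?_)
  · rw [← hfF t ht, hf_id ht, _root_.id]
  · rw [hfF 0 (by simp)]; simp
  · rw [hfF 1 (by simp)]; simp
  · rw [hfF _ ⟨by linarith [hs.1, ht.1], by linarith [hs.2, ht.2]⟩, ← hline_midpoint, hmid,
      ← hfF s hs, ← hfF t ht]
    simp only [midpoint_eq_smul_add, invOf_eq_inv, lineMap_apply_module]
    module

variable {G : W → V}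

theorem mem_line_of_leftInverse (hG : PreservesWbtw G) (hGF : LeftInverse G F) {a b : V} {p : W}
    (hab : a ≠ b) (hp : p ∈ line[ℝ, F a, F b]) : G p ∈ line[ℝ, a, b] := by
  simpa only [hGF _] using hG.mem_line (by rwa [hGF a, hGF b]) hp

theorem map_add_sub (hF : PreservesWbtw F) (hG : PreservesWbtw G) (hGF : LeftInverse G F)
    {u v w : V} (huv : u ≠ v) (hw : w ∉ line[ℝ, u, v]) : F (u + v - w) = F u + F v - F w := by
  have hwu : w ≠ u := fun h => hw (h ▸ left_mem_affineSpan_pair ℝ u v)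
  have hwv : w ≠ v := fun h => hw (h ▸ right_mem_affineSpan_pair ℝ u v)
  -- The opposite sides of the parallelogram `u, w, v, u + v - w` stay disjoint under `F`.
  have hdisj : ∀ {a b : V}, a ≠ b → w ∉ line[ℝ, a, b] →
      Disjoint (line[ℝ, F a, F w] : Set W) line[ℝ, F b, F (a + b - w)] := by
    intro a b hab hwab
    have hwa : w ≠ a := fun h => hwab (h ▸ left_mem_affineSpan_pair ℝ a b)
    refine Set.disjoint_left.mpr fun z hz hz' => ?_
    refine Set.disjoint_left.mp (disjoint_line_line_add_sub hab hwab)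
      (hG.mem_line_of_leftInverse hGF ?_ hz) (hG.mem_line_of_leftInverse hGF ?_ hz')
    · exact fun h => hwa h.symm
    · exact fun h => hwa (by linear_combination (norm := module) h)
  -- `u + v - w` is the midpoint of `2u - w ∈ line[w, u]` and `2v - w ∈ line[w, v]`, so its
  -- image lies in the plane of `F u, F v, F w`.
  have hpq : lineMap w u (2 : ℝ) ≠ lineMap w v (2 : ℝ) := fun h => huv <| by
    simp only [lineMap_apply_module] at h
    linear_combination (norm := module) (1 / 2 : ℝ) • h
  have hmem : u + v - w ∈ line[ℝ, lineMap w u (2 : ℝ), lineMap w v (2 : ℝ)] :=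
    mem_line_iff.mpr ⟨1 / 2, by simp only [lineMap_apply_module]; module⟩
  obtain ⟨α, β, γ, hs, hd⟩ := exists_eq_affineCombination_of_mem_line
    (hF.mem_line (hGF.injective.ne hwu) (lineMap_mem_affineSpan_pair 2 w u))
    (hF.mem_line (hGF.injective.ne hwv) (lineMap_mem_affineSpan_pair 2 w v))
    (hF.mem_line (hGF.injective.ne hpq) hmem)
  have hβ : β = 1 := eq_one_of_disjoint_line hs hd (hdisj huv hw)
  have hα : α = 1 := eq_one_of_disjoint_line (d := F (v + u - w)) (α := β) (γ := γ)
    (by linarith) (by rw [add_comm v u, hd]; abel) (hdisj huv.symm (by rwa [pair_comm]))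
  rw [hd, hα, hβ, show γ = -1 by linarith]
  module

theorem map_midpoint (hV : 1 < Module.rank ℝ V) (hF : PreservesWbtw F) (hG : PreservesWbtw G)
    (hGF : LeftInverse G F) (u v : V) : F (midpoint ℝ u v) = midpoint ℝ (F u) (F v) := by
  rcases eq_or_ne u v with rfl | huv
  · simp only [midpoint_self]
  obtain ⟨w, hw⟩ := exists_notMem_line hV u v
  have hww' : w ≠ u + v - w := by
    intro h
    refine hw (mem_line_iff.mpr ⟨1 / 2, ?_⟩)
    linear_combination (norm := module) (1 / 2 : ℝ) • h
  refine eq_midpoint_of_mem_line_of_mem_line (c := F w)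
    (fun h => hw (hGF w ▸ hG.mem_line_of_leftInverse hGF huv h))
    (hF.mem_line (hGF.injective.ne huv) (mem_line_iff.mpr ⟨1 / 2, ?_⟩)) ?_
  · rw [midpoint_eq_smul_add, invOf_eq_inv]
    module
  rw [← hF.map_add_sub hG hGF huv hw]
  refine hF.mem_line (hGF.injective.ne hww') (mem_line_iff.mpr ⟨1 / 2, ?_⟩)
  rw [midpoint_eq_smul_add, invOf_eq_inv]
  module

end PreservesWbtw

theorem one_lt_rank_strongDual {E : Type*} [AddCommGroup E] [TopologicalSpace E] [Module ℝ E]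
    [SeparatingDual ℝ E] (hE : 1 < Module.rank ℝ E) : 1 < Module.rank ℝ (E →L[ℝ] ℝ) := by
  by_contra! h
  obtain ⟨φ, hφ⟩ := rank_le_one_iff.mp h
  -- Every functional is a multiple of `φ`, so `φ` separates points.
  have hinj : Injective φ := fun x y hxy => sub_eq_zero.mp <|
    SeparatingDual.eq_zero_of_forall_dual_eq_zero fun f => by
      obtain ⟨r, rfl⟩ := hφ f
      simp [hxy]
  have hrank := LinearMap.lift_rank_le_of_injective φ.toLinearMap hinj
  rw [Module.rank_self, Cardinal.lift_one, Cardinal.lift_le_one_iff] at hrank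
  exact hE.not_ge hrank

theorem sameRay_of_forall_mul_nonneg {E : Type*} [AddCommGroup E] [TopologicalSpace E]
    [Module ℝ E] {A B : E →L[ℝ] ℝ} (h : ∀ x, 0 ≤ A x * B x) : SameRay ℝ A B := by
  by_cases hA : A = 0
  · exact hA ▸ SameRay.zero_left B
  obtain ⟨x₀, hx₀⟩ : ∃ x, A x ≠ 0 := by
    by_contra! h0
    exact hA (ContinuousLinearMap.ext h0)
  -- Moving from `x₀` along a kernel direction of `A` on which `B` is nonzero makes `A * B < 0`.
  have hker : ∀ y, A y = 0 → B y = 0 := by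
    intro y hy
    by_contra hBy
    have := h (x₀ + ((-1 - A x₀ * B x₀) / (A x₀ * B y)) • y)
    simp only [map_add, map_smul, smul_eq_mul, hy, mul_zero, add_zero] at this
    field_simp at this
    linarith
  have hB : B = (B x₀ / A x₀) • A := by
    ext x
    have := hker (x - (A x / A x₀) • x₀) (by simp [hx₀])
    simp only [map_sub, map_smul, smul_eq_mul, sub_eq_zero] at this
    simp only [_root_.smul_apply, smul_eq_mul, this]
    field_simp
  rw [hB]
  refine SameRay.sameRay_nonneg_smul_right A ?_
  rw [show B x₀ / A x₀ = A x₀ * B x₀ / A x₀ ^ 2 by field_simp]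
  exact div_nonneg (h x₀) (sq_nonneg _)

theorem preservesWbtw_of_quasiconvex [NormedAddCommGroup X] [NormedSpace ℝ X]
    {F : (X →L[ℝ] ℝ) → (X →L[ℝ] ℝ)} (hF : ∀ x : X, QCvx fun u => F u x) : PreservesWbtw F := by
  intro u w v h
  rw [← mem_segment_iff_wbtw] at h ⊢
  rw [mem_segment_iff_sameRay]
  obtain ⟨a, b, ha, hb, hab, rfl⟩ := h
  obtain rfl : b = 1 - a := by linarith
  refine sameRay_of_forall_mul_nonneg fun x => ?_
  have hmax := hF x u v a ha (by linarith)
  have hmin := hF (-x) u v a ha (by linarith)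
  simp only [map_neg, max_neg_neg, neg_le_neg_iff] at hmax hmin
  simp only [_root_.sub_apply]
  rcases le_total (F u x) (F v x) with h | h
  · rw [max_eq_right h] at hmax
    rw [min_eq_left h] at hmin
    exact mul_nonneg (sub_nonneg.2 hmin) (sub_nonneg.2 hmax)
  · rw [max_eq_left h] at hmax
    rw [min_eq_right h] at hmin
    exact mul_nonneg_of_nonpos_of_nonpos (sub_nonpos.2 hmax) (sub_nonpos.2 hmin)

theorem quasiconvex_bijection_affine_general
    [NormedAddCommGroup X] [NormedSpace ℝ X]
    (hdim : 2 ≤ Module.rank ℝ X)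
    (M g : (X →L[ℝ] ℝ) → (X →L[ℝ] ℝ))
    (hgl : Function.LeftInverse g M)
    (hq : ∀ x : X, QCvx (fun u => M u x) ∧ QCvx (fun u => g u x)) :
    ∀ (u v : X →L[ℝ] ℝ) (s : ℝ), 0 ≤ s → s ≤ 1 →
      M (s • u + (1 - s) • v) = s • M u + (1 - s) • M v := by
  intro u v s hs0 hs1
  have hM := preservesWbtw_of_quasiconvex fun x => (hq x).1
  have hg := preservesWbtw_of_quasiconvex fun x => (hq x).2
  have hdual := one_lt_rank_strongDual (Cardinal.one_lt_two.trans_le hdim)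
  have hmid := hM.map_midpoint hdual hg hgl
  simpa only [lineMap_apply_module, add_comm] using hM.map_lineMap hmid v u ⟨hs0, hs1⟩

theorem quasiconvex_bijection_affine
    [NormedAddCommGroup X] [NormedSpace ℝ X] [CompleteSpace X]
    (hdim : 2 ≤ Module.rank ℝ X)
    (M g : (X →L[ℝ] ℝ) → (X →L[ℝ] ℝ))
    (hbij : Function.Bijective M)
    (hgl : Function.LeftInverse g M) (hgr : Function.RightInverse g M)
    (hq : ∀ x : X, QCvx (fun u => M u x) ∧ QCvx (fun u => g u x)) :
    ∀ (u v : X →L[ℝ] ℝ) (s : ℝ), 0 ≤ s → s ≤ 1 →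
      M (s • u + (1 - s) • v) = s • M u + (1 - s) • M v :=
  quasiconvex_bijection_affine_general hdim M g hgl hq
end
end

section
/- If T : C(X) → C(X) is fully order preserving and f ∈ C(X) is finite everywhere, then T(f) is also finite everywhere. -/
open Set

noncomputable section

variable {X : Type*}

/-! Pull back the indicator `δ_{x₀} = {x₀}ᶜ.indicator ⊤` of a point through `T`, say
`T g = δ_{x₀}`. Since `f` is finite everywhere, `f ⊔ g` is again proper, and monotonicity gives
`T f ≤ T (f ⊔ g)` and `δ_{x₀} ≤ T (f ⊔ g)`. The proper function `T (f ⊔ g)` is therefore finite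
exactly at `x₀`, and so is `T f` there. -/

theorem eq_top_of_indicator_compl_top_le {s : Set X} {φ : X → EReal}
    (h : sᶜ.indicator (fun _ => ⊤) ≤ φ) {x : X} (hx : x ∉ s) : φ x = ⊤ :=
  top_le_iff.mp (by simpa [hx] using h x)

section

variable [NormedAddCommGroup X] [NormedSpace ℝ X]

theorem isClFun_indicator_compl_top {s : Set X} (hne : s.Nonempty) (hs : IsClosed s)
    (hconv : Convex ℝ s) : IsClFun X (sᶜ.indicator fun _ => ⊤) := by
  refine ⟨fun x => ?_, ⟨hne.some, by simp [hne.some_mem]⟩,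
    hs.isOpen_compl.lowerSemicontinuous_indicator le_top, ?_⟩
  · by_cases hx : x ∈ s <;> simp [hx]
  intro x y a b ha hb hab
  rcases ha.eq_or_lt with rfl | ha'
  · obtain rfl : b = 1 := by linarith
    simp
  rcases hb.eq_or_lt with rfl | hb'
  · obtain rfl : a = 1 := by linarith
    simp
  by_cases hx : x ∈ s
  · by_cases hy : y ∈ s
    · simp [hx, hy, hconv hx hy ha hb hab]
    · simp [hx, hy, EReal.coe_mul_top_of_pos hb']
  · by_cases hy : y ∈ s
    · simp [hx, hy, EReal.coe_mul_top_of_pos ha']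
    · simp [hx, hy, EReal.coe_mul_top_of_pos ha', EReal.coe_mul_top_of_pos hb']

theorem IsClFun.sup {f g : X → EReal} (hf : IsClFun X f) (hg : IsClFun X g)
    (hdom : ∃ x, f x ≠ ⊤ ∧ g x ≠ ⊤) : IsClFun X (f ⊔ g) := by
  obtain ⟨x₁, hfx₁, hgx₁⟩ := hdom
  refine ⟨fun x => by simp [hf.1 x], ⟨x₁, by simp [hfx₁, hgx₁]⟩,
    hf.2.2.1.sup hg.2.2.1, fun x y a b ha hb hab => ?_⟩
  refine sup_le ((hf.2.2.2 x y a b ha hb hab).trans ?_) ((hg.2.2.2 x y a b ha hb hab).trans ?_) <;>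
    gcongr <;> simp

end

theorem image_finite_everywhere_general
    [NormedAddCommGroup X] [NormedSpace ℝ X]
    (T : Cl X → Cl X) (hT : FullyOrderPreserving T)
    (f : Cl X) (hf : ∀ x, f.1 x ≠ ⊤) :
    ∀ x, (T f).1 x ≠ ⊤ := by
  intro x₀
  obtain ⟨g, hg⟩ := hT.1 ⟨_, isClFun_indicator_compl_top (singleton_nonempty x₀)
    isClosed_singleton (convex_singleton x₀)⟩
  obtain ⟨x₁, hgx₁⟩ := g.2.2.1
  let h : Cl X := ⟨f.1 ⊔ g.1, f.2.sup g.2 ⟨x₁, hf x₁, hgx₁⟩⟩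
  have hfh : (T f).1 ≤ (T h).1 := (hT.2 f h).1 le_sup_left
  have hgh : ({x₀}ᶜ : Set X).indicator (fun _ => ⊤) ≤ (T h).1 := by
    simpa [hg] using (hT.2 g h).1 le_sup_right
  obtain ⟨x₂, hx₂⟩ := (T h).2.2.1
  obtain rfl : x₂ = x₀ := not_not.mp fun hne => hx₂ (eq_top_of_indicator_compl_top_le hgh hne)
  exact fun htop => hx₂ (top_le_iff.mp (htop ▸ hfh x₂))

theorem image_finite_everywhere
    [NormedAddCommGroup X] [NormedSpace ℝ X] [CompleteSpace X]
    (T : Cl X → Cl X) (hT : FullyOrderPreserving T)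
    (f : Cl X) (hf : ∀ x, f.1 x ≠ ⊤) :
    ∀ x, (T f).1 x ≠ ⊤ :=
  image_finite_everywhere_general T hT f hf
end
end

section
/- An operator T : C(X) → C(X) is an order preserving involution (T(T(f)) = f for all f, and f ≤ g implies T(f) ≤ T(g)) if and only if there exist c ∈ X, w ∈ X* and a continuous linear automorphism E of X with E² = I_X, Ec = −c, E*w = −w, such that T(f)(x) = f(Ex + c) + ⟨w, x⟩ − ½⟨c, w⟩ for all f ∈ C(X), x ∈ X. -/
open Set

noncomputable section

variable {X : Type*}

/-!
An order-preserving involution `T` of `C(X)` is an order automorphism. The affine functions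
`h_{u,α}` are the elements of `C(X)` whose lower set is a chain (this needs affine minorants,
i.e. Hahn–Banach), and the functions `δ_{x,β}` (`β` at `x`, `+∞` elsewhere) are those whose
upper set is a chain. Hence `T` permutes both families, fibrewise in the slope `u` and in the
point `x`, and preserves the incidence `h_{u,α} ≤ δ_{x,β} ↔ u x + α ≤ β`. Read as a Galois
correspondence between monotone bijections of `ℝ`, the incidence forces
`T δ_{x,β} = δ_{A x, β + k x}` with every `u ∘ A` continuous affine, so that by the closed graph
theorem `A x = E x + c` with `E` a continuous linear involution. Finally
`T f ≤ T δ_{x,β} ↔ f ≤ δ_{x,β}` reads off `T f (A x) = f x + k x`.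
-/

open Filter Topology

theorem EReal.eq_of_forall_le_coe_iff {a b : EReal} (h : ∀ γ : ℝ, a ≤ γ ↔ b ≤ γ) : a = b :=
  le_antisymm (EReal.le_of_forall_lt_iff_le.1 fun γ hγ => (h γ).2 hγ.le)
    (EReal.le_of_forall_lt_iff_le.1 fun γ hγ => (h γ).1 hγ.le)

theorem EReal.eq_add_of_forall_le_iff {a b : EReal} {k : ℝ}
    (h : ∀ β : ℝ, b ≤ ((β + k : ℝ) : EReal) ↔ a ≤ β) : b = a + k := by
  refine EReal.eq_of_forall_le_coe_iff fun γ => ?_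
  have hγ := h (γ - k)
  rw [_root_.sub_add_cancel, EReal.coe_sub,
    EReal.le_sub_iff_add_le (Or.inl (EReal.coe_ne_bot k)) (Or.inl (EReal.coe_ne_top k))] at hγ
  exact hγ

theorem Monotone.apply_eq_of_forall_le_iff {α β : Type*} [Preorder α] [PartialOrder β]
    {s : α → β} (hs : Monotone s) (hsurj : Function.Surjective s) {t : α} {K : β}
    (h : ∀ a, a ≤ t ↔ s a ≤ K) : s t = K := by
  obtain ⟨a, rfl⟩ := hsurj K
  exact le_antisymm ((h t).1 le_rfl) (hs ((h a).2 le_rfl))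

theorem AddMonoidHom.apply_eq_mul_of_monotone {ψ : ℝ →+ ℝ} (hmono : Monotone ψ)
    (hsurj : Function.Surjective ψ) (t : ℝ) : ψ t = t * ψ 1 := by
  simpa using map_real_smul ψ (hmono.continuous_of_surjective hsurj) t 1

theorem ConvexOn.le_of_bddAbove_univ {E : Type*} [AddCommGroup E] [Module ℝ E] {k : E → ℝ}
    (hk : ConvexOn ℝ univ k) {C : ℝ} (hC : ∀ x, k x ≤ C) (x y : E) : k y ≤ k x := by
  by_contra! hlt
  obtain ⟨n, hn⟩ := exists_nat_gt ((C - k x) / (k y - k x))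
  rw [div_lt_iff₀ (sub_pos.2 hlt)] at hn
  -- `y` divides the segment from `x` to `z = y + n • (y - x)` in the ratio `n : 1`.
  set z := (n + 1 : ℝ) • y - (n : ℝ) • x
  have hy : ((n : ℝ) / (n + 1)) • x + (1 / (n + 1) : ℝ) • z = y := by
    match_scalars <;> field_simp
    ring
  have hjensen := hk.2 (mem_univ x) (mem_univ z) (by positivity : (0 : ℝ) ≤ n / (n + 1))
    (by positivity : (0 : ℝ) ≤ 1 / (n + 1)) (by field_simp)
  rw [hy, smul_eq_mul, smul_eq_mul] at hjensen
  have : (n + 1) * k y ≤ n * k x + C := by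
    have := mul_le_mul_of_nonneg_left hjensen (by positivity : (0 : ℝ) ≤ n + 1)
    field_simp at this
    linarith [hC z]
  nlinarith

section Affine

variable [NormedAddCommGroup X] [NormedSpace ℝ X]

theorem affCl_le_affCl_iff {u u' : X →L[ℝ] ℝ} {α α' : ℝ} :
    affCl u α ≤ affCl u' α' ↔ u = u' ∧ α ≤ α' := by
  refine ⟨fun h => ?_, ?_⟩
  · have hr : ∀ x, u x + α ≤ u' x + α' := fun x => EReal.coe_le_coe_iff.1 (h x)
    have hu : ∀ x, u x = u' x := by
      intro x
      by_contra hne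
      have hd : u x - u' x ≠ 0 := sub_ne_zero.2 hne
      have := hr (((α' - α + 1) / (u x - u' x)) • x)
      simp only [map_smul, smul_eq_mul] at this
      have key : (α' - α + 1) / (u x - u' x) * u x - (α' - α + 1) / (u x - u' x) * u' x
          = α' - α + 1 := by rw [← mul_sub, div_mul_cancel₀ _ hd]
      linarith
    refine ⟨ContinuousLinearMap.ext hu, by simpa using hr 0⟩
  · rintro ⟨rfl, h⟩ x
    exact EReal.coe_le_coe_iff.2 (by linarith)

theorem IsClFun.convexOn_toReal {f : X → EReal} (hf : IsClFun X f) (hfin : ∀ x, f x ≠ ⊤) :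
    ConvexOn ℝ univ fun x => (f x).toReal := by
  have hcoe : ∀ x, f x = ((f x).toReal : EReal) :=
    fun x => (EReal.coe_toReal (hfin x) (hf.1 x)).symm
  refine ⟨convex_univ, fun x _ y _ a b ha hb hab => ?_⟩
  have := hf.2.2.2 x y a b ha hb hab
  rwa [hcoe x, hcoe y, hcoe (a • x + b • y), ← EReal.coe_mul, ← EReal.coe_mul, ← EReal.coe_add,
    EReal.coe_le_coe_iff] at this

theorem eq_affCl_of_le_affCl {g : Cl X} {u : X →L[ℝ] ℝ} {α : ℝ} (h : g ≤ affCl u α) :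
    ∃ c, g = affCl u c := by
  have hfin : ∀ x, g.1 x ≠ ⊤ := fun x => ne_top_of_le_ne_top (EReal.coe_ne_top _) (h x)
  have hcoe : ∀ x, g.1 x = ((g.1 x).toReal : EReal) :=
    fun x => (EReal.coe_toReal (hfin x) (g.2.1 x)).symm
  have hconv : ConvexOn ℝ univ fun x => (g.1 x).toReal - u x :=
    (g.2.convexOn_toReal hfin).sub (u.toLinearMap.concaveOn convex_univ)
  have hbdd : ∀ x, (g.1 x).toReal - u x ≤ α := fun x => by
    have := h x
    rw [hcoe x] at this
    have := EReal.coe_le_coe_iff.1 this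
    linarith
  refine ⟨(g.1 0).toReal - u 0, Subtype.ext (funext fun x => ?_)⟩
  have := le_antisymm (hconv.le_of_bddAbove_univ hbdd 0 x) (hconv.le_of_bddAbove_univ hbdd x 0)
  rw [hcoe x]
  exact EReal.coe_eq_coe_iff.2 (by linarith)

end Affine

section Minorant

variable [NormedAddCommGroup X] [NormedSpace ℝ X]

theorem IsClFun.isClosed_epigraph {f : X → EReal} (hf : IsClFun X f) :
    IsClosed {p : X × ℝ | f p.1 ≤ p.2} :=
  (lowerSemicontinuous_iff_isClosed_epigraph.1 hf.2.2.1).preimage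
    (continuous_fst.prodMk (continuous_coe_real_ereal.comp continuous_snd))

theorem IsClFun.convex_epigraph_s18 {f : X → EReal} (hf : IsClFun X f) :
    Convex ℝ {p : X × ℝ | f p.1 ≤ p.2} := by
  intro p hp q hq a b ha hb hab
  calc f (a • p.1 + b • q.1) ≤ a * f p.1 + b * f q.1 := hf.2.2.2 _ _ a b ha hb hab
    _ ≤ a * p.2 + b * q.2 :=
      add_le_add (mul_le_mul_of_nonneg_left hp (EReal.coe_nonneg.2 ha))
        (mul_le_mul_of_nonneg_left hq (EReal.coe_nonneg.2 hb))
    _ = ((a * p.2 + b * q.2 : ℝ) : EReal) := by norm_cast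

theorem IsClFun.exists_separating {f : X → EReal} (hf : IsClFun X f) {x₀ : X} {r : ℝ}
    (hr : (r : EReal) < f x₀) :
    ∃ (u : X →L[ℝ] ℝ) (s m : ℝ), 0 ≤ s ∧ u x₀ + r * s < m ∧
      ∀ y (t : ℝ), f y ≤ t → m < u y + t * s := by
  obtain ⟨φ, m, hφx, hφS⟩ := geometric_hahn_banach_point_closed hf.convex_epigraph_s18
    hf.isClosed_epigraph (x := (x₀, r)) (not_le.2 hr)
  have hφ : ∀ y t, φ (y, t) = φ (y, 0) + t * φ (0, 1) := fun y t => by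
    rw [← smul_eq_mul, ← map_smul, ← map_add, Prod.smul_mk, smul_zero, smul_eq_mul, mul_one,
      Prod.mk_add_mk, add_zero, zero_add]
  set u : X →L[ℝ] ℝ := φ.comp (ContinuousLinearMap.inl ℝ X ℝ)
  have hsep : ∀ y (t : ℝ), f y ≤ t → m < u y + t * φ (0, 1) := fun y t hyt => by
    simpa [u, ← hφ] using hφS (y, t) hyt
  refine ⟨u, φ (0, 1), m, ?_, by simpa [u, ← hφ] using hφx, hsep⟩
  -- `s ≥ 0`, or `u x₁ + t * s` would tend to `-∞` on the vertical ray above `x₁ ∈ dom f`.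
  obtain ⟨x₁, hx₁⟩ := hf.2.1
  by_contra! hs
  set t := max (f x₁).toReal ((m - u x₁) / φ (0, 1) + 1)
  have h₁ := hsep x₁ t (by
    rw [← EReal.coe_toReal hx₁ (hf.1 x₁)]
    exact EReal.coe_le_coe_iff.2 (le_max_left _ _))
  have h₂ : (m - u x₁) / φ (0, 1) + 1 ≤ t := le_max_right _ _
  have h₃ := mul_le_mul_of_nonpos_right h₂ hs.le
  rw [add_mul, div_mul_cancel₀ _ hs.ne] at h₃
  linarith

theorem affCl_le_of_separating {f : Cl X} {u : X →L[ℝ] ℝ} {s m : ℝ} (hs : 0 < s)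
    (hsep : ∀ y (t : ℝ), f.1 y ≤ t → m < u y + t * s) : affCl (-s⁻¹ • u) (m / s) ≤ f := by
  intro y
  by_cases hy : f.1 y = ⊤
  · exact hy ▸ le_top
  have := hsep y _ (EReal.coe_toReal hy (f.2.1 y)).ge
  rw [← EReal.coe_toReal hy (f.2.1 y)]
  refine EReal.coe_le_coe_iff.2 ?_
  simp only [smul_apply, smul_eq_mul, neg_mul]
  rw [← div_eq_inv_mul, neg_add_eq_sub, ← sub_div, div_le_iff₀ hs]
  linarith

theorem Cl.exists_affCl_le (f : Cl X) : ∃ u α, affCl u α ≤ f := by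
  obtain ⟨x₁, hx₁⟩ := f.2.2.1
  have hcoe := EReal.coe_toReal hx₁ (f.2.1 x₁)
  obtain ⟨u, s, m, hs, hx, hsep⟩ := f.2.exists_separating (x₀ := x₁) (r := (f.1 x₁).toReal - 1)
    (lt_of_lt_of_eq (EReal.coe_lt_coe_iff.2 (sub_one_lt _)) hcoe)
  rcases hs.eq_or_lt with rfl | hs
  · linarith [hsep x₁ _ hcoe.ge]
  · exact ⟨_, _, affCl_le_of_separating hs hsep⟩

theorem Cl.exists_affCl_le_lt (f : Cl X) {x₀ : X} {r : ℝ} (hr : (r : EReal) < f.1 x₀) :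
    ∃ u α, affCl u α ≤ f ∧ r < u x₀ + α := by
  obtain ⟨u, s, m, hs, hx, hsep⟩ := f.2.exists_separating hr
  rcases hs.eq_or_lt with rfl | hs
  -- A vertical hyperplane is tilted by adding a large multiple of it to any affine minorant.
  · obtain ⟨ub, αb, hb⟩ := f.exists_affCl_le
    simp only [mul_zero, add_zero] at hx hsep
    obtain ⟨n, hn⟩ := exists_nat_gt ((r - (ub x₀ + αb)) / (m - u x₀))
    rw [div_lt_iff₀ (sub_pos.2 hx)] at hn
    refine ⟨ub - (n : ℝ) • u, αb + n * m, fun y => ?_, ?_⟩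
    · by_cases hy : f.1 y = ⊤
      · exact hy ▸ le_top
      refine le_trans (EReal.coe_le_coe_iff.2 ?_) (hb y)
      have := hsep y _ (EReal.coe_toReal hy (f.2.1 y)).ge
      simp only [sub_apply, smul_apply, smul_eq_mul]
      nlinarith [n.cast_nonneg (α := ℝ)]
    · simp only [sub_apply, smul_apply, smul_eq_mul]
      linarith
  · refine ⟨_, _, affCl_le_of_separating hs hsep, ?_⟩
    simp only [smul_apply, smul_eq_mul, neg_mul]
    rw [← div_eq_inv_mul, neg_add_eq_sub, ← sub_div, lt_div_iff₀ hs]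
    linarith

end Minorant

section Restrict

variable [NormedAddCommGroup X] [NormedSpace ℝ X]

theorem IsClFun.piecewise {f : X → EReal} (hf : IsClFun X f) {K : Set X}
    [DecidablePred (· ∈ K)] (hK : IsClosed K) (hKc : Convex ℝ K) (hfK : ∃ x ∈ K, f x ≠ ⊤) :
    IsClFun X (K.piecewise f ⊤) := by
  have hbot : ∀ y, K.piecewise f ⊤ y ≠ ⊥ := fun y => by
    by_cases hy : y ∈ K <;> simp [hy, hf.1 y]
  refine ⟨hbot, ?_, fun y z (hz : z < _) => ?_, fun x y a b ha hb hab => ?_⟩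
  · obtain ⟨x, hxK, hx⟩ := hfK
    exact ⟨x, by simpa [hxK] using hx⟩
  · show ∀ᶠ y' in 𝓝 y, z < K.piecewise f ⊤ y'
    by_cases hy : y ∈ K
    · rw [K.piecewise_eq_of_mem _ _ hy] at hz
      filter_upwards [hf.2.2.1 y z hz] with y' hy'
      by_cases hy'K : y' ∈ K <;> simp [hy'K, hy', hz.trans_le le_top]
    · rw [K.piecewise_eq_of_notMem _ _ hy] at hz
      filter_upwards [hK.isOpen_compl.mem_nhds hy] with y' hy'
      simpa [K.piecewise_eq_of_notMem _ _ hy'] using hz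
  rcases ha.eq_or_lt with rfl | ha
  · obtain rfl : b = 1 := by linarith
    rw [zero_smul, one_smul, zero_add]
    simp
  rcases hb.eq_or_lt with rfl | hb
  · obtain rfl : a = 1 := by linarith
    rw [zero_smul, one_smul, add_zero]
    simp
  by_cases hxy : x ∈ K ∧ y ∈ K
  · simpa [hxy.1, hxy.2, hKc hxy.1 hxy.2 ha.le hb.le hab] using hf.2.2.2 x y a b ha.le hb.le hab
  have hmul : ∀ {c : ℝ} {z : EReal}, 0 < c → z ≠ ⊥ → (c : EReal) * z ≠ ⊥ := fun hc hz => by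
    simp [EReal.mul_eq_bot, hc.le, hc, hz]
  refine le_top.trans_eq ?_
  rcases not_and_or.1 hxy with hx | hy
  · rw [K.piecewise_eq_of_notMem _ _ hx, Pi.top_apply, EReal.coe_mul_top_of_pos ha,
      EReal.top_add_of_ne_bot (hmul hb (hbot y))]
  · rw [K.piecewise_eq_of_notMem _ _ hy, Pi.top_apply, EReal.coe_mul_top_of_pos hb,
      EReal.add_top_of_ne_bot (hmul ha (hbot x))]

open Classical in
def Cl.restrict (f : Cl X) {K : Set X} (hK : IsClosed K) (hKc : Convex ℝ K)
    (hfK : ∃ x ∈ K, f.1 x ≠ ⊤) : Cl X :=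
  ⟨K.piecewise f.1 ⊤, f.2.piecewise hK hKc hfK⟩

section
variable (f : Cl X) {K : Set X} (hK : IsClosed K) (hKc : Convex ℝ K) (hfK : ∃ x ∈ K, f.1 x ≠ ⊤)

theorem Cl.restrict_apply_of_mem {y : X} (hy : y ∈ K) : (f.restrict hK hKc hfK).1 y = f.1 y := by
  simp [Cl.restrict, hy]

theorem Cl.restrict_apply_of_notMem {y : X} (hy : y ∉ K) : (f.restrict hK hKc hfK).1 y = ⊤ := by
  simp [Cl.restrict, hy]

theorem Cl.le_restrict : f ≤ f.restrict hK hKc hfK := fun y => by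
  by_cases hy : y ∈ K
  · rw [f.restrict_apply_of_mem hK hKc hfK hy]
  · rw [f.restrict_apply_of_notMem hK hKc hfK hy]
    exact le_top

end

end Restrict

section Delta

variable [NormedAddCommGroup X] [NormedSpace ℝ X]

def delCl (x : X) (β : ℝ) : Cl X :=
  (affCl 0 β).restrict isClosed_singleton (convex_singleton x) ⟨x, rfl, EReal.coe_ne_top _⟩

theorem delCl_apply_self (x : X) (β : ℝ) : (delCl x β).1 x = β := by
  simp [delCl, Cl.restrict, affCl, aff]

theorem delCl_apply_of_ne {x y : X} (β : ℝ) (h : y ≠ x) : (delCl x β).1 y = ⊤ := by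
  simp [delCl, Cl.restrict, h]

theorem le_delCl_iff {f : Cl X} {x : X} {β : ℝ} : f ≤ delCl x β ↔ f.1 x ≤ β := by
  refine ⟨fun h => delCl_apply_self x β ▸ h x, fun h y => ?_⟩
  rcases eq_or_ne y x with rfl | hy
  · rwa [delCl_apply_self]
  · exact (delCl_apply_of_ne β hy).symm ▸ le_top

theorem delCl_le_delCl_iff {x x' : X} {β β' : ℝ} :
    delCl x β ≤ delCl x' β' ↔ x = x' ∧ β ≤ β' := by
  rw [le_delCl_iff]
  rcases eq_or_ne x' x with rfl | hx
  · simp [delCl_apply_self]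
  · simp [delCl_apply_of_ne β hx, Ne.symm hx]

theorem affCl_le_delCl_iff {u : X →L[ℝ] ℝ} {α : ℝ} {x : X} {β : ℝ} :
    affCl u α ≤ delCl x β ↔ u x + α ≤ β :=
  le_delCl_iff.trans EReal.coe_le_coe_iff

theorem isChain_Iic_iff_exists_eq_affCl (f : Cl X) :
    IsChain (· ≤ ·) (Iic f) ↔ ∃ u α, f = affCl u α := by
  refine ⟨fun hf => ?_, ?_⟩
  · obtain ⟨u, α₀, hα₀⟩ := f.exists_affCl_le
    have hslope : ∀ {u' α}, affCl u' α ≤ f → u' = u := fun {u' α} h => by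
      rcases hf.total h hα₀ with hle | hle
      exacts [(affCl_le_affCl_iff.1 hle).1, (affCl_le_affCl_iff.1 hle).1.symm]
    obtain ⟨x₁, hx₁⟩ := f.2.2.1
    suffices f ≤ affCl u ((f.1 x₁).toReal - u x₁) from ⟨u, eq_affCl_of_le_affCl this⟩
    intro x
    by_contra! hx
    obtain ⟨u', α, hle, hlt⟩ := f.exists_affCl_le_lt hx
    obtain rfl := hslope hle
    have := (EReal.coe_toReal hx₁ (f.2.1 x₁)).symm ▸ hle x₁
    have := EReal.coe_le_coe_iff.1 this
    linarith
  · rintro ⟨u, α, rfl⟩ g hg h hh -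
    obtain ⟨c, rfl⟩ := eq_affCl_of_le_affCl hg
    obtain ⟨c', rfl⟩ := eq_affCl_of_le_affCl hh
    simp only [affCl_le_affCl_iff, true_and]
    exact le_total c c'

theorem Cl.eq_of_isChain_Ici {f : Cl X} (hf : IsChain (· ≤ ·) (Ici f)) {x₁ x₂ : X}
    (hx₁ : f.1 x₁ ≠ ⊤) (hx₂ : f.1 x₂ ≠ ⊤) : x₂ = x₁ := by
  by_contra hne
  obtain ⟨u, hu⟩ : ∃ u : X →L[ℝ] ℝ, u x₁ < u x₂ := by
    obtain ⟨u, hu⟩ := SeparatingDual.exists_separating_of_ne (R := ℝ) hne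
    rcases hu.lt_or_gt with h | h
    exacts [⟨-u, by simpa using h⟩, ⟨u, h⟩]
  obtain ⟨c, hc₁, hc₂⟩ := exists_between hu
  -- The restrictions of `f` to the half-spaces `u ≤ c` and `c ≤ u` are incomparable majorants.
  have hK₁ := isClosed_le u.continuous (continuous_const (y := c))
  have hK₂ := isClosed_le (continuous_const (y := c)) u.continuous
  have hKc₁ := convex_halfSpace_le u.isLinear c
  have hKc₂ := convex_halfSpace_ge u.isLinear c
  rcases hf.total (f.le_restrict hK₁ hKc₁ ⟨x₁, hc₁.le, hx₁⟩)
    (f.le_restrict hK₂ hKc₂ ⟨x₂, hc₂.le, hx₂⟩) with h | h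
  · have := h x₂
    rw [f.restrict_apply_of_notMem hK₁ hKc₁ _ (fun h : u x₂ ≤ c => h.not_gt hc₂),
      f.restrict_apply_of_mem hK₂ hKc₂ _ hc₂.le, top_le_iff] at this
    exact hx₂ this
  · have := h x₁
    rw [f.restrict_apply_of_notMem hK₂ hKc₂ _ (fun h : c ≤ u x₁ => h.not_gt hc₁),
      f.restrict_apply_of_mem hK₁ hKc₁ _ hc₁.le, top_le_iff] at this
    exact hx₁ this

theorem isChain_Ici_iff_exists_eq_delCl (f : Cl X) :
    IsChain (· ≤ ·) (Ici f) ↔ ∃ x β, f = delCl x β := by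
  refine ⟨fun hf => ?_, ?_⟩
  · obtain ⟨x₁, hx₁⟩ := f.2.2.1
    refine ⟨x₁, (f.1 x₁).toReal, Subtype.ext (funext fun y => ?_)⟩
    rcases eq_or_ne y x₁ with rfl | hy
    · rw [delCl_apply_self, EReal.coe_toReal hx₁ (f.2.1 y)]
    · rw [delCl_apply_of_ne _ hy]
      by_contra hne
      exact hy (f.eq_of_isChain_Ici hf hx₁ hne)
  · rintro ⟨x, β, rfl⟩ g hg h hh -
    have htop : ∀ {k : Cl X}, delCl x β ≤ k → ∀ y ≠ x, k.1 y = ⊤ := fun hk y hy =>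
      top_le_iff.1 (delCl_apply_of_ne β hy ▸ hk y)
    rcases le_total (g.1 x) (h.1 x) with hle | hle
    · left
      intro y
      rcases eq_or_ne y x with rfl | hy
      exacts [hle, (htop hh y hy).symm ▸ le_top]
    · right
      intro y
      rcases eq_or_ne y x with rfl | hy
      exacts [hle, (htop hg y hy).symm ▸ le_top]

end Delta

section OrderInvolution

variable {α : Type*} [Preorder α] {T : α → α}

theorem Monotone.le_iff_le_of_involutive (hm : Monotone T) (hi : Function.Involutive T)
    {a b : α} : T a ≤ T b ↔ a ≤ b :=
  ⟨fun h => hi a ▸ hi b ▸ hm h, fun h => hm h⟩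

theorem Monotone.isChain_Iic_of_involutive (hm : Monotone T) (hi : Function.Involutive T)
    {a : α} (h : IsChain (· ≤ ·) (Iic a)) : IsChain (· ≤ ·) (Iic (T a)) := by
  intro b (hb : b ≤ T a) c (hc : c ≤ T a) _
  rw [← hm.le_iff_le_of_involutive hi, hi] at hb hc
  simpa only [hm.le_iff_le_of_involutive hi] using h.total hb hc

theorem Monotone.isChain_Ici_of_involutive (hm : Monotone T) (hi : Function.Involutive T)
    {a : α} (h : IsChain (· ≤ ·) (Ici a)) : IsChain (· ≤ ·) (Ici (T a)) := by
  intro b (hb : T a ≤ b) c (hc : T a ≤ c) _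
  rw [← hm.le_iff_le_of_involutive hi, hi] at hb hc
  simpa only [hm.le_iff_le_of_involutive hi] using h.total hb hc

theorem Monotone.exists_fiberwise_of_involutive {ι : Type*} (hm : Monotone T)
    (hi : Function.Involutive T) {P : ι → ℝ → α} (hP : ∀ i j a b, P i a ≤ P j b ↔ i = j ∧ a ≤ b)
    (hT : ∀ i a, ∃ j b, T (P i a) = P j b) :
    ∃ (V : ι → ι) (M : ι → ℝ → ℝ), (∀ i a, T (P i a) = P (V i) (M i a)) ∧
      (∀ i, V (V i) = i) ∧ (∀ i a, M (V i) (M i a) = a) ∧ ∀ i, Monotone (M i) := by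
  choose V M hVM using hT
  have hmap : ∀ {i a b}, a ≤ b → V i a = V i b ∧ M i a ≤ M i b := fun hab => by
    simpa only [← hVM, ← hP] using hm ((hP _ _ _ _).2 ⟨rfl, hab⟩)
  have hV : ∀ i a, V i a = V i 0 := fun i a => by
    rcases le_total a 0 with h | h
    exacts [(hmap h).1, (hmap h).1.symm]
  have hT' : ∀ i a, T (P i a) = P (V i 0) (M i a) := fun i a => by rw [hVM, hV]
  have hinj : ∀ {i j a b}, P i a = P j b → i = j ∧ a = b := fun h =>
    ⟨((hP _ _ _ _).1 h.le).1, le_antisymm ((hP _ _ _ _).1 h.le).2 ((hP _ _ _ _).1 h.ge).2⟩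
  have hTT : ∀ i a, V (V i 0) 0 = i ∧ M (V i 0) (M i a) = a := fun i a =>
    hinj (by rw [← hT', ← hT', hi])
  exact ⟨fun i => V i 0, M, hT', fun i => (hTT i 0).1, fun i a => (hTT i a).2,
    fun i a b hab => (hmap hab).2⟩

end OrderInvolution

theorem exists_continuousLinearMap_eq_of_forall_dual_comp {𝕜 E F : Type*} [RCLike 𝕜]
    [NormedAddCommGroup E] [NormedSpace 𝕜 E] [CompleteSpace E]
    [NormedAddCommGroup F] [NormedSpace 𝕜 F] [CompleteSpace F] {g : E → F}
    (h : ∀ u : StrongDual 𝕜 F, ∃ L : StrongDual 𝕜 E, ∀ x, u (g x) = L x) :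
    ∃ G : E →L[𝕜] F, ⇑G = g := by
  choose L hL using h
  have hext : ∀ {y z : F}, (∀ u : StrongDual 𝕜 F, u y = u z) → y = z :=
    SeparatingDual.eq_iff_forall_dual_eq.2
  let g' : E →ₗ[𝕜] F :=
    { toFun := g
      map_add' := fun x y => hext fun u => by simp [hL]
      map_smul' := fun c x => hext fun u => by simp [hL] }
  have hgraph : (g'.graph : Set (E × F)) = ⋂ u, {p | u p.2 = L u p.1} := by
    ext p
    simp only [SetLike.mem_coe, LinearMap.mem_graph_iff, mem_iInter, mem_ofPred_eq, ← hL]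
    exact ⟨fun h u => congrArg u h, hext⟩
  have hclosed : IsClosed (g'.graph : Set (E × F)) := hgraph ▸ isClosed_iInter fun u =>
    isClosed_eq (u.continuous.comp continuous_snd) ((L u).continuous.comp continuous_fst)
  exact ⟨.ofIsClosedGraph hclosed, ContinuousLinearMap.coeFn_ofIsClosedGraph hclosed⟩

/-- The action of an order-preserving involution of `C(X)` on the affine functions,
`h_{u,α} ↦ h_{V u, M u α}`, and on the functions `δ_{x,β}` (`β` at `x`, `+∞` elsewhere),
`δ_{x,β} ↦ δ_{A x, G x β}`; `le_iff` says that it preserves `h_{u,α} ≤ δ_{x,β}`. -/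
structure IncidenceInvolution (X : Type*) [NormedAddCommGroup X] [NormedSpace ℝ X] where
  V : (X →L[ℝ] ℝ) → X →L[ℝ] ℝ
  M : (X →L[ℝ] ℝ) → ℝ → ℝ
  A : X → X
  G : X → ℝ → ℝ
  V_V : ∀ u, V (V u) = u
  M_V_M : ∀ u α, M (V u) (M u α) = α
  monotone_M : ∀ u, Monotone (M u)
  A_A : ∀ x, A (A x) = x
  G_A_G : ∀ x β, G (A x) (G x β) = β
  le_iff : ∀ u α x β, u x + α ≤ β ↔ V u (A x) + M u α ≤ G x β

namespace IncidenceInvolution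

variable [NormedAddCommGroup X] [NormedSpace ℝ X] (D : IncidenceInvolution X)

theorem M_surjective (u : X →L[ℝ] ℝ) : Function.Surjective (D.M u) :=
  fun α => ⟨D.M (D.V u) α, by simpa only [D.V_V] using D.M_V_M (D.V u) α⟩

theorem M_sub_apply (u : X →L[ℝ] ℝ) (x : X) (β : ℝ) :
    D.M u (β - u x) = D.G x β - D.V u (D.A x) :=
  (D.monotone_M u).apply_eq_of_forall_le_iff (D.M_surjective u) fun α => by
    rw [le_sub_iff_add_le', D.le_iff, le_sub_iff_add_le']

theorem G_eq (x : X) (β : ℝ) : D.G x β = D.M 0 β + D.V 0 (D.A x) := by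
  have := D.M_sub_apply 0 x β
  simp only [zero_apply, sub_zero] at this
  linarith

theorem M_eq (u : X →L[ℝ] ℝ) (β : ℝ) : D.M u β = D.M 0 β - D.M 0 0 + D.M u 0 := by
  have h₁ := D.M_sub_apply u 0 β
  have h₀ := D.M_sub_apply u 0 0
  simp only [map_zero, sub_zero, D.G_eq] at h₁ h₀
  linarith

theorem M_zero_add [Nontrivial X] (β γ : ℝ) : D.M 0 (β + γ) = D.M 0 β + D.M 0 γ - D.M 0 0 := by
  obtain ⟨x₀, hx₀⟩ := exists_ne (0 : X)
  obtain ⟨u, hu⟩ := SeparatingDual.exists_eq_one (R := ℝ) hx₀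
  have h := D.M_sub_apply u (-γ • x₀)
  simp only [map_smul, hu, smul_eq_mul, mul_one, sub_neg_eq_add, D.G_eq] at h
  have h₁ := h β
  have h₀ := h 0
  rw [zero_add, D.M_eq u γ] at h₀
  rw [D.M_eq] at h₁
  linarith

theorem M_zero_apply [Nontrivial X] (β : ℝ) : D.M 0 β = β + D.M 0 0 := by
  -- `M 0 - M 0 0` is additive and monotone, hence linear; its slope is `1` because
  -- `M 0 ∘ M 0` is a translation.
  let ψ : ℝ →+ ℝ := AddMonoidHom.mk' (fun t => D.M 0 t - D.M 0 0) fun s t => by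
    simp only [D.M_zero_add]; ring
  have hψ := ψ.apply_eq_mul_of_monotone (fun a b hab => by simpa [ψ] using D.monotone_M 0 hab)
    (fun t => by obtain ⟨a, ha⟩ := D.M_surjective 0 (t + D.M 0 0); exact ⟨a, by simp [ψ, ha]⟩)
  have hM : ∀ t, D.M 0 t = t * ψ 1 + D.M 0 0 := fun t => by
    rw [← hψ]; simp [ψ]
  have hinv : ∀ α, D.M 0 (D.M 0 α) - D.M 0 0 + D.M (D.V 0) 0 = α := fun α => by
    rw [← D.M_eq, D.M_V_M]
  have h₀ := hinv 0
  have h₁ := hinv 1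
  rw [hM, hM 0] at h₀
  rw [hM, hM 1] at h₁
  have hslope : ψ 1 = 1 := by
    have hnn : 0 ≤ ψ 1 := by simpa [ψ] using D.monotone_M 0 zero_le_one
    have hsq : ψ 1 * ψ 1 = 1 := by linarith
    nlinarith
  rw [hM, hslope, mul_one]

theorem G_eq_add [Nontrivial X] (x : X) (β : ℝ) : D.G x β = β + (D.M 0 0 + D.V 0 (D.A x)) := by
  rw [D.G_eq, D.M_zero_apply, add_assoc]

theorem V_zero_A_add [Nontrivial X] (x : X) : D.V 0 (D.A x) + D.V 0 x + 2 * D.M 0 0 = 0 := by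
  have := D.G_A_G x 0
  rw [D.G_eq_add, D.G_eq_add, D.A_A] at this
  linarith

theorem apply_A_sub_A_zero [Nontrivial X] (u : X →L[ℝ] ℝ) (y : X) :
    u (D.A y - D.A 0) = (D.V u - D.V 0) y := by
  have hy := D.M_sub_apply u (D.A y) (u (D.A y))
  have h0 := D.M_sub_apply u (D.A 0) (u (D.A 0))
  rw [sub_self, D.G_eq_add, D.A_A] at hy h0
  rw [map_zero, map_zero] at h0
  rw [map_sub, sub_apply]
  linarith

theorem exists_continuousLinearEquiv [CompleteSpace X] [Nontrivial X] :
    ∃ E : X ≃L[ℝ] X, (∀ x, E (E x) = x) ∧ E (D.A 0) = -D.A 0 ∧ ∀ x, D.A x = E x + D.A 0 := by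
  obtain ⟨E, hE⟩ := exists_continuousLinearMap_eq_of_forall_dual_comp (𝕜 := ℝ)
    (g := fun y => D.A y - D.A 0) fun u => ⟨D.V u - D.V 0, D.apply_A_sub_A_zero u⟩
  have hA : ∀ x, D.A x = E x + D.A 0 := fun x => by rw [hE, sub_add_cancel]
  have hEc : E (D.A 0) = -D.A 0 := by
    have := D.A_A 0
    rw [hA (D.A 0)] at this
    exact eq_neg_of_add_eq_zero_left this
  have hEE : ∀ x, E (E x) = x := fun x => by
    have := D.A_A x
    rw [hA x, hA, map_add, hEc, add_assoc, neg_add_cancel, add_zero] at this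
    exact this
  exact ⟨.equivOfInverse E E hEE hEE, hEE, hEc, hA⟩

end IncidenceInvolution

section Involution

variable [NormedAddCommGroup X] [NormedSpace ℝ X] {T : Cl X → Cl X}

theorem exists_incidenceInvolution (hm : Monotone T) (hi : Function.Involutive T) :
    ∃ D : IncidenceInvolution X, ∀ x β, T (delCl x β) = delCl (D.A x) (D.G x β) := by
  obtain ⟨V, M, hVM, hVV, hMVM, hM⟩ := hm.exists_fiberwise_of_involutive hi
    (fun _ _ _ _ => affCl_le_affCl_iff) fun u α =>
      (isChain_Iic_iff_exists_eq_affCl _).1 (hm.isChain_Iic_of_involutive hi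
        ((isChain_Iic_iff_exists_eq_affCl _).2 ⟨u, α, rfl⟩))
  obtain ⟨A, G, hAG, hAA, hGAG, -⟩ := hm.exists_fiberwise_of_involutive hi
    (fun _ _ _ _ => delCl_le_delCl_iff) fun x β =>
      (isChain_Ici_iff_exists_eq_delCl _).1 (hm.isChain_Ici_of_involutive hi
        ((isChain_Ici_iff_exists_eq_delCl _).2 ⟨x, β, rfl⟩))
  refine ⟨⟨V, M, A, G, hVV, hMVM, hM, hAA, hGAG, fun u α x β => ?_⟩, hAG⟩
  rw [← affCl_le_delCl_iff, ← affCl_le_delCl_iff, ← hm.le_iff_le_of_involutive hi, hVM, hAG]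

theorem apply_A_eq [Nontrivial X] (hm : Monotone T) (hi : Function.Involutive T)
    (D : IncidenceInvolution X) (hD : ∀ x β, T (delCl x β) = delCl (D.A x) (D.G x β))
    (f : Cl X) (y : X) :
    (T f).1 (D.A y) = f.1 y + ((D.M 0 0 + D.V 0 (D.A y) : ℝ) : EReal) :=
  EReal.eq_add_of_forall_le_iff fun β => by
    rw [← D.G_eq_add, ← le_delCl_iff, ← hD, hm.le_iff_le_of_involutive hi, le_delCl_iff]

theorem exists_of_monotone_of_involutive [CompleteSpace X] [Nontrivial X] (hm : Monotone T)
    (hi : Function.Involutive T) :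
    ∃ (c : X) (w : X →L[ℝ] ℝ) (E : X ≃L[ℝ] X),
      (∀ x, E (E x) = x) ∧ E c = -c ∧ (∀ x, w (E x) = -(w x)) ∧
      ∀ (f : Cl X) (x : X), (T f).1 x = f.1 (E x + c) + ((w x - w c / 2 : ℝ) : EReal) := by
  obtain ⟨D, hD⟩ := exists_incidenceInvolution hm hi
  obtain ⟨E, hEE, hEc, hA⟩ := D.exists_continuousLinearEquiv
  have hw : ∀ x, D.V 0 (D.A x) + D.V 0 x + 2 * D.M 0 0 = 0 := D.V_zero_A_add
  have hm₀ : D.M 0 0 = -(D.V 0 (D.A 0) / 2) := by linarith [hw 0, map_zero (D.V 0)]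
  refine ⟨D.A 0, D.V 0, E, hEE, hEc, fun x => ?_, fun f x => ?_⟩
  · have := hw x
    rw [hA x, map_add] at this
    linarith
  · have := apply_A_eq hm hi D hD f (D.A x)
    rw [D.A_A] at this
    rw [this, hA x, hm₀]
    congr 2
    ring

theorem involutive_of_forall_apply_eq {c : X} {w : X →L[ℝ] ℝ} {E : X ≃L[ℝ] X}
    (hEE : ∀ x, E (E x) = x) (hEc : E c = -c) (hwE : ∀ x, w (E x) = -(w x))
    (hT : ∀ (f : Cl X) (x : X), (T f).1 x = f.1 (E x + c) + ((w x - w c / 2 : ℝ) : EReal)) :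
    Function.Involutive T := fun f => Subtype.ext <| funext fun x => by
  rw [hT, hT, map_add, hEE, hEc, neg_add_cancel_right, map_add, hwE, add_assoc, ← EReal.coe_add]
  convert add_zero (f.1 x) using 2
  norm_cast
  ring

end Involution

theorem order_preserving_involution_characterization
    [NormedAddCommGroup X] [NormedSpace ℝ X] [CompleteSpace X]
    (hdim : 2 ≤ Module.rank ℝ X)
    (T : Cl X → Cl X) :
    ((∀ f g : Cl X, f.1 ≤ g.1 → (T f).1 ≤ (T g).1) ∧ ∀ f : Cl X, T (T f) = f) ↔
      ∃ (c : X) (w : X →L[ℝ] ℝ) (E : X ≃L[ℝ] X),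
        (∀ x, E (E x) = x) ∧ E c = -c ∧ (∀ x, w (E x) = -(w x)) ∧
        ∀ (f : Cl X) (x : X),
          (T f).1 x = f.1 (E x + c) + ((w x - w c / 2 : ℝ) : EReal) := by
  refine ⟨fun ⟨hm, hi⟩ => ?_, fun ⟨c, w, E, hEE, hEc, hwE, hT⟩ => ⟨fun f g hfg x => ?_, ?_⟩⟩
  · have : Nontrivial X := rank_pos_iff_nontrivial.1 (lt_of_lt_of_le (by norm_num) hdim)
    exact exists_of_monotone_of_involutive hm hi
  · rw [hT, hT]
    exact add_le_add_left (hfg _) _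
  · exact involutive_of_forall_apply_eq hEE hEc hwE hT
end
end
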